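/- arXiv:1304.3373 — 11 statements merged into one kernel-verified Lean document; each statement's English description precedes it below -/
import Mathlib

section
/- Let G be an abelian p-group with an unbounded basic subgroup, and let x ∈ G generate a cyclic subgroup ⟨x⟩ such that every monomorphism ⟨x⟩ → G extends to an endomorphism of G. Then ⟨x⟩ ∩ G¹ = 0, where G¹ = ⋂_{n>0} pⁿG is the first Ulm subgroup. -/
open AddSubgroup

/-- The `p`-height of an element, as an extended natural number. -/
noncomputable def pHeight (p : ℕ) {G : Type*} [AddCommGroup G] (x : G) : ℕ∞ :=
  sSup {n : ℕ∞ | ∃ m : ℕ, n = (m : ℕ∞) ∧ ∃ y : G, p ^ m • y = x}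

/-- `G` is an abelian `p`-group. -/
def IsPGrp (p : ℕ) (G : Type*) [AddCommGroup G] : Prop :=
  ∀ x : G, ∃ n : ℕ, p ^ n • x = 0

/-- `H ∈ Q(G)`: every homomorphism `H → G` extends to an endomorphism of `G`. -/
def InQ {G : Type*} [AddCommGroup G] (H : AddSubgroup G) : Prop :=
  ∀ f : H →+ G, ∃ g : G →+ G, ∀ x : H, g x = f x

/-- `H ∈ P(G)`: every monomorphism `H → G` extends to an endomorphism of `G`. -/
def InP {G : Type*} [AddCommGroup G] (H : AddSubgroup G) : Prop :=
  ∀ f : H →+ G, Function.Injective f → ∃ g : G →+ G, ∀ x : H, g x = f x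

/-- `H ∈ W(G)`: every endomorphism of `H` extends to an endomorphism of `G`. -/
def InW {G : Type*} [AddCommGroup G] (H : AddSubgroup G) : Prop :=
  ∀ f : H →+ H, ∃ g : G →+ G, ∀ x : H, g x = (f x : G)

/-- `K` is an internal direct sum of cyclic subgroups. -/
def IsDirectSumOfCyclics {G : Type*} [AddCommGroup G] (K : AddSubgroup G) : Prop :=
  ∃ (ι : Type) (a : ι → G), (∀ i, a i ∈ K) ∧ (⨆ i, zmultiples (a i)) = K ∧
    iSupIndep (fun i => zmultiples (a i))

/-- `K` is a `p`-pure subgroup: `pⁿG ∩ K = pⁿK`. -/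
def IsPure (p : ℕ) {G : Type*} [AddCommGroup G] (K : AddSubgroup G) : Prop :=
  ∀ n : ℕ, ∀ x ∈ K, (∃ y : G, p ^ n • y = x) → ∃ z ∈ K, p ^ n • z = x

/-- The quotient `G/K` is divisible (equivalently `G = K + pG`). -/
def QuotDivisible (p : ℕ) {G : Type*} [AddCommGroup G] (K : AddSubgroup G) : Prop :=
  ∀ x : G, ∃ y : G, x - p • y ∈ K

/-- The Ulm sequence of `x` has a gap before index `k` (with `h₋₁ = -1`). -/
def HasGapBefore (p : ℕ) {G : Type*} [AddCommGroup G] (x : G) (k : ℕ) : Prop :=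
  if k = 0 then 0 < pHeight p x
  else pHeight p (p ^ (k - 1) • x) + 1 < pHeight p (p ^ k • x)

/-!
Let `x` have order `p ^ r` and suppose `⟨x⟩ ∩ G¹ ≠ 0`; then the socle element `p ^ (r - 1) • x`
lies in `G¹`. As the basic subgroup is unbounded, one of its cyclic summands `⟨a⟩` has order
`p ^ s` with `r < s`, and purity gives `p ^ (s - 1) • a` height exactly `s - 1`. The monomorphism
`x ↦ x + p ^ (s - r) • a` sends the socle to `p ^ (r - 1) • x + p ^ (s - 1) • a`, which has height
`s - 1`; but an endomorphism extending it cannot lower the height of `p ^ (r - 1) • x ∈ G¹`.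
-/

section

variable {G : Type*} [AddCommGroup G]

theorem exists_addOrderOf_eq_prime_pow {p : ℕ} (hp : p.Prime) (hG : IsPGrp p G) (x : G) :
    ∃ r, addOrderOf x = p ^ r := by
  obtain ⟨n, hn⟩ := hG x
  obtain ⟨r, -, hr⟩ := (Nat.dvd_prime_pow hp).mp (addOrderOf_dvd_of_nsmul_eq_zero hn)
  exact ⟨r, hr⟩

theorem exists_zsmul_eq_pow_pred_nsmul {p r : ℕ} (hp : p.Prime) {x y : G}
    (hx : addOrderOf x = p ^ r) (hy : y ∈ zmultiples x) (hy0 : y ≠ 0) :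
    ∃ e : ℤ, e • y = p ^ (r - 1) • x := by
  obtain ⟨c, rfl⟩ := mem_zmultiples_iff.mp hy
  have hord : ∀ k : ℤ, k • x = 0 ↔ (p : ℤ) ^ r ∣ k := fun k => by
    rw [← addOrderOf_dvd_iff_zsmul_eq_zero, hx]; push_cast; rfl
  obtain ⟨j, hjr, hj⟩ := (Nat.dvd_prime_pow hp).mp
    (by simpa [Int.natAbs_pow] using Int.gcd_dvd_natAbs_right c ((p : ℤ) ^ r))
  have hjr : j < r := by
    refine lt_of_le_of_ne hjr fun hjr => hy0 ((hord c).mpr ?_)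
    exact_mod_cast hjr ▸ hj ▸ Int.gcd_dvd_left c ((p : ℤ) ^ r)
  have hbez := Int.gcd_eq_gcd_ab c ((p : ℤ) ^ r)
  rw [hj] at hbez
  push_cast at hbez
  refine ⟨(p : ℤ) ^ (r - 1 - j) * c.gcdA ((p : ℤ) ^ r), ?_⟩
  have hsplit : (p : ℤ) ^ (r - 1) = (p : ℤ) ^ (r - 1 - j) * (p : ℤ) ^ j := by
    rw [← pow_add]; congr 1; omega
  rw [smul_smul, ← natCast_zsmul, ← sub_eq_zero, ← sub_smul, hord]
  exact ⟨-((p : ℤ) ^ (r - 1 - j) * c.gcdB ((p : ℤ) ^ r)), by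
    push_cast; linear_combination -(p : ℤ) ^ (r - 1 - j) * hbez - hsplit⟩

theorem exists_pow_nsmul_eq_pow_pred_nsmul {p r : ℕ} (hp : p.Prime) {x z : G}
    (hx : addOrderOf x = p ^ r) (hz : z ∈ zmultiples x) (hz0 : z ≠ 0)
    (hzG : ∀ n : ℕ, ∃ y : G, p ^ n • y = z) (n : ℕ) : ∃ y : G, p ^ n • y = p ^ (r - 1) • x := by
  obtain ⟨e, he⟩ := exists_zsmul_eq_pow_pred_nsmul hp hx hz hz0
  obtain ⟨y, hy⟩ := hzG n
  exact ⟨e • y, by rw [smul_comm, hy, he]⟩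

theorem exists_zmultiples_hom_apply_eq (x t : G) (ht : addOrderOf x • t = 0) :
    ∃ F : zmultiples x →+ G, F ⟨x, mem_zmultiples x⟩ = t := by
  set φ : ℤ →+ zmultiples x := zmultiplesHom _ ⟨x, mem_zmultiples x⟩
  have hφ : Function.Surjective φ := by
    rintro ⟨y, hy⟩
    obtain ⟨k, rfl⟩ := mem_zmultiples_iff.mp hy
    exact ⟨k, rfl⟩
  have hker : φ.ker ≤ (zmultiplesHom G t).ker := fun k hk => by
    have hkx : k • x = 0 := congrArg Subtype.val hk
    obtain ⟨m, rfl⟩ := addOrderOf_dvd_iff_zsmul_eq_zero.mpr hkx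
    simp [mul_zsmul', ht]
  refine ⟨φ.liftOfSurjective hφ ⟨_, hker⟩, ?_⟩
  convert φ.liftOfRightInverse_comp_apply _ (Function.rightInverse_surjInv hφ) ⟨_, hker⟩ 1 <;>
    simp [φ]

theorem injective_of_pow_pred_nsmul_ne_zero {p r : ℕ} (hp : p.Prime) {x : G}
    (hx : addOrderOf x = p ^ r) (F : zmultiples x →+ G)
    (hF : p ^ (r - 1) • F ⟨x, mem_zmultiples x⟩ ≠ 0) : Function.Injective F := by
  refine (injective_iff_map_eq_zero F).mpr fun y hy => ?_
  by_contra hy0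
  obtain ⟨e, he⟩ := exists_zsmul_eq_pow_pred_nsmul hp hx y.2 (by simpa using hy0)
  have : e • y = p ^ (r - 1) • ⟨x, mem_zmultiples x⟩ := Subtype.ext he
  exact hF (by rw [← map_nsmul, ← this, map_zsmul, hy, smul_zero])

theorem exists_nsmul_ne_zero_of_iSup_zmultiples {ι : Type*} {a : ι → G} {B : AddSubgroup G}
    (hsup : ⨆ i, zmultiples (a i) = B) {n : ℕ} (hB : ∃ b ∈ B, n • b ≠ 0) :
    ∃ i, n • a i ≠ 0 := by
  by_contra! h
  obtain ⟨b, hb, hnb⟩ := hB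
  have hle : B ≤ (nsmulAddMonoidHom n : G →+ G).ker :=
    hsup ▸ iSup_le fun i => zmultiples_le.mpr (h i)
  exact hnb (hle hb)

theorem nsmul_eq_zero_of_mem_sup_of_disjoint {A C : AddSubgroup G} (hAC : Disjoint A C) {n : ℕ}
    (hA : ∀ u ∈ A, n • u = 0) {b : G} (hb : b ∈ A ⊔ C) (hnb : n • b ∈ A) : n • b = 0 := by
  obtain ⟨u, hu, v, hv, rfl⟩ := mem_sup.mp hb
  rw [smul_add, hA u hu, zero_add] at hnb ⊢
  exact disjoint_iff_inf_le.mp hAC ⟨hnb, nsmul_mem hv n⟩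

theorem not_exists_pow_nsmul_eq_of_summand {p s : ℕ} (hp : 1 < p) {B : AddSubgroup G}
    (hpure : IsPure p B) {ι : Type*} {a : ι → G} (hsup : ⨆ i, zmultiples (a i) = B)
    (hind : iSupIndep fun i => zmultiples (a i)) {i : ι} (hs : addOrderOf (a i) = p ^ s)
    (hs0 : s ≠ 0) : ¬ ∃ y : G, p ^ s • y = p ^ (s - 1) • a i := by
  intro hy
  have haB : a i ∈ B := hsup ▸ mem_iSup_of_mem i (mem_zmultiples _)
  obtain ⟨b, hb, hpb⟩ := hpure s _ (nsmul_mem haB _) hy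
  rw [← hsup, iSup_split_single _ i] at hb
  have hkill : ∀ u ∈ zmultiples (a i), p ^ s • u = 0 := by
    rintro _ ⟨k, rfl⟩
    simp only [← hs, smul_comm _ k, addOrderOf_nsmul_eq_zero, smul_zero]
  have hlt : p ^ (s - 1) < addOrderOf (a i) := hs ▸ Nat.pow_lt_pow_right hp (by omega)
  refine nsmul_ne_zero_of_lt_addOrderOf (pow_ne_zero _ (by omega)) hlt ?_
  rw [← hpb]
  exact nsmul_eq_zero_of_mem_sup_of_disjoint (hind i) hkill hb
    (hpb ▸ nsmul_mem (mem_zmultiples _) _)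

theorem not_exists_nsmul_eq_add {n : ℕ} {w v : G} (hw : ∃ y : G, n • y = w)
    (hv : ¬ ∃ y : G, n • y = v) : ¬ ∃ y : G, n • y = w + v := by
  rintro ⟨y, hy⟩
  obtain ⟨y', rfl⟩ := hw
  exact hv ⟨y - y', by rw [smul_sub, hy, add_sub_cancel_left]⟩

end

theorem stmt1_general {G : Type*} [AddCommGroup G] (p : ℕ) (hp : p.Prime) (hG : IsPGrp p G)
    (B : AddSubgroup G) (hpure : IsPure p B) (hcyc : IsDirectSumOfCyclics B)
    (hunb : ∀ n : ℕ, ∃ b ∈ B, p ^ n • b ≠ 0)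
    (x : G) (hx : InP (zmultiples x)) :
    ∀ z ∈ zmultiples x, (∀ n : ℕ, ∃ y : G, p ^ n • y = z) → z = 0 := by
  intro z hz hzG
  by_contra hz0
  obtain ⟨r, hr⟩ := exists_addOrderOf_eq_prime_pow hp hG x
  have hr0 : r ≠ 0 := by
    rintro rfl
    rw [pow_zero, AddMonoid.addOrderOf_eq_one_iff] at hr
    simp_all
  have hxG := exists_pow_nsmul_eq_pow_pred_nsmul hp hr hz hz0 hzG
  obtain ⟨ι, a, -, hsup, hind⟩ := hcyc
  obtain ⟨i, hi⟩ := exists_nsmul_ne_zero_of_iSup_zmultiples hsup (hunb r)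
  obtain ⟨s, hs⟩ := exists_addOrderOf_eq_prime_pow hp hG (a i)
  have hrs : r < s := by
    by_contra! hsr
    exact hi (addOrderOf_dvd_iff_nsmul_eq_zero.mp (hs ▸ pow_dvd_pow p hsr))
  set t := x + p ^ (s - r) • a i
  have hpt : p ^ (r - 1) • t = p ^ (r - 1) • x + p ^ (s - 1) • a i := by
    rw [smul_add, smul_smul, ← pow_add, show r - 1 + (s - r) = s - 1 by omega]
  have ht : ¬ ∃ y : G, p ^ s • y = p ^ (r - 1) • t := hpt ▸ not_exists_nsmul_eq_add (hxG s)
    (not_exists_pow_nsmul_eq_of_summand hp.one_lt hpure hsup hind hs (by omega))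
  obtain ⟨F, hF⟩ := exists_zmultiples_hom_apply_eq x t (by
    rw [smul_add, addOrderOf_nsmul_eq_zero, hr, smul_smul, ← pow_add,
      show r + (s - r) = s by omega, ← hs, addOrderOf_nsmul_eq_zero, add_zero])
  obtain ⟨g, hg⟩ := hx F <| injective_of_pow_pred_nsmul_ne_zero hp hr F fun h =>
    ht ⟨0, by rw [← hF, h, smul_zero]⟩
  obtain ⟨y, hy⟩ := hxG s
  exact ht ⟨g y, by rw [← map_nsmul, hy, map_nsmul, hg ⟨x, mem_zmultiples x⟩, hF]⟩

theorem stmt1 {G : Type*} [AddCommGroup G] (p : ℕ) (hp : p.Prime) (hG : IsPGrp p G)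
    (B : AddSubgroup G) (hpure : IsPure p B) (hcyc : IsDirectSumOfCyclics B)
    (hdiv : QuotDivisible p B) (hunb : ∀ n : ℕ, ∃ b ∈ B, p ^ n • b ≠ 0)
    (x : G) (hx : InP (zmultiples x)) :
    ∀ z ∈ zmultiples x, (∀ n : ℕ, ∃ y : G, p ^ n • y = z) → z = 0 :=
  stmt1_general p hp hG B hpure hcyc hunb x hx
end

section
/- Let G = B ⊕ D be an abelian p-group with B bounded of exponent n (pⁿB = 0, p^{n-1}B ≠ 0) and D divisible. Suppose x ∈ G, written x = b + d with b ∈ B, d ∈ D, satisfies exp(x) > n. If every monomorphism ⟨x⟩ → G extends to an endomorphism of G, then exp(b) = n and exp(d) > n. -/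
open AddSubgroup

/-! Since `pⁿB = 0` and `x` has order `pᵉ` with `e > n`, the order of `x = b + d`, the lcm of the
orders of `b` and `d`, forces `d` to have order `pᵉ`. If `p^(n-1) b = 0`, pick `b₀ ∈ B` with
`p^(n-1) b₀ ≠ 0`: then `b₀ + d` also has order `pᵉ`, so `x ↦ b₀ + d` is a monomorphism of `⟨x⟩`
and extends to an endomorphism `g`. As `D` is divisible, `p^(n-1) x = p^(n-1) d` lies in `pⁿG`,
hence so does its image `p^(n-1) (b₀ + d)`; but `pⁿG ⊆ D`, contradicting `p^(n-1) b₀ ≠ 0`. -/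

theorem Nat.eq_pow_of_lcm_eq_pow {p a c n e : ℕ} (hp : p.Prime) (ha : a ∣ p ^ n) (hne : n < e)
    (h : a.lcm c = p ^ e) : c = p ^ e := by
  obtain ⟨k, hke, rfl⟩ := (Nat.dvd_prime_pow hp).mp (h ▸ Nat.dvd_lcm_right a c)
  rcases hke.eq_or_lt with rfl | hke
  · rfl
  have : p ^ e ∣ p ^ (e - 1) :=
    h ▸ Nat.lcm_dvd (ha.trans (pow_dvd_pow p (by omega))) (pow_dvd_pow p (by omega))
  have := (Nat.pow_dvd_pow_iff_le_right hp.one_lt).mp this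
  omega

section

variable {G : Type*} [AddCommGroup G]

theorem exists_mem_pow_nsmul_eq {S : AddSubgroup G} {m : ℕ} (hS : ∀ d ∈ S, ∃ d' ∈ S, m • d' = d)
    (k : ℕ) : ∀ d ∈ S, ∃ d' ∈ S, m ^ k • d' = d := by
  induction k with
  | zero => exact fun d hd => ⟨d, hd, one_nsmul d⟩
  | succ k ih =>
    intro d hd
    obtain ⟨d₁, hd₁, rfl⟩ := hS d hd
    obtain ⟨d₂, hd₂, rfl⟩ := ih d₁ hd₁
    exact ⟨d₂, hd₂, by rw [pow_succ', mul_nsmul']⟩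

theorem nsmul_add_eq_zero_iff_of_disjoint {B D : AddSubgroup G} (hBD : Disjoint B D) {b d : G}
    (hb : b ∈ B) (hd : d ∈ D) (k : ℕ) : k • (b + d) = 0 ↔ k • b = 0 ∧ k • d = 0 := by
  refine ⟨fun h => ?_, fun ⟨hkb, hkd⟩ => by rw [smul_add, hkb, hkd, add_zero]⟩
  rw [smul_add, add_eq_zero_iff_eq_neg] at h
  have hkb : k • b = 0 :=
    AddSubgroup.disjoint_def.mp hBD (nsmul_mem hb k) (h ▸ neg_mem (nsmul_mem hd k))
  exact ⟨hkb, neg_eq_zero.mp (hkb ▸ h).symm⟩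

theorem addOrderOf_add_eq_lcm_of_disjoint {B D : AddSubgroup G} (hBD : Disjoint B D) {b d : G}
    (hb : b ∈ B) (hd : d ∈ D) : addOrderOf (b + d) = (addOrderOf b).lcm (addOrderOf d) := by
  have hkill := (nsmul_add_eq_zero_iff_of_disjoint hBD hb hd (addOrderOf (b + d))).mp
    (addOrderOf_nsmul_eq_zero _)
  refine Nat.dvd_antisymm (addOrderOf_dvd_of_nsmul_eq_zero ?_) (Nat.lcm_dvd
    (addOrderOf_dvd_of_nsmul_eq_zero hkill.1) (addOrderOf_dvd_of_nsmul_eq_zero hkill.2))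
  exact (nsmul_add_eq_zero_iff_of_disjoint hBD hb hd _).mpr
    ⟨addOrderOf_dvd_iff_nsmul_eq_zero.mp (Nat.dvd_lcm_left _ _),
      addOrderOf_dvd_iff_nsmul_eq_zero.mp (Nat.dvd_lcm_right _ _)⟩

theorem nsmul_mem_of_isCompl {B D : AddSubgroup G} (hBD : IsCompl B D) {m : ℕ}
    (hB : ∀ b ∈ B, m • b = 0) (z : G) : m • z ∈ D := by
  obtain ⟨β, hβ, δ, hδ, rfl⟩ := AddSubgroup.mem_sup.mp (hBD.sup_eq_top ▸ mem_top z)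
  rw [smul_add, hB β hβ, zero_add]
  exact nsmul_mem hδ m

/-- `k • (b + m • d) = m • (k • d)`, so its image under `g` is `m`-divisible, and `m`-divisible
elements lie in `D`. -/
theorem nsmul_eq_zero_of_map_add_nsmul_eq {B D : AddSubgroup G} (hBD : IsCompl B D) {m k : ℕ}
    (hB : ∀ b ∈ B, m • b = 0) {b b₀ d : G} (hb₀ : b₀ ∈ B) (g : G →+ G)
    (hg : g (b + m • d) = b₀ + m • d) (hk : k • b = 0) : k • b₀ = 0 := by
  have himage : k • b₀ + k • m • d ∈ D := by
    rw [← smul_add, ← hg, ← map_nsmul, smul_add, hk, zero_add, smul_comm, map_nsmul]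
    exact nsmul_mem_of_isCompl hBD hB _
  have hD : k • b₀ ∈ D :=
    (add_mem_cancel_right (nsmul_mem (nsmul_mem_of_isCompl hBD hB d) k)).mp himage
  exact AddSubgroup.disjoint_def.mp hBD.disjoint (nsmul_mem hb₀ k) hD

theorem exists_injective_zmultiples_hom_apply_eq {x y : G} (h : addOrderOf x = addOrderOf y) :
    ∃ f : zmultiples x →+ G, Function.Injective f ∧ f ⟨x, mem_zmultiples x⟩ = y := by
  have hker : ∀ k : ℤ, k • x = 0 ↔ k • y = 0 := fun k => by
    rw [← addOrderOf_dvd_iff_zsmul_eq_zero, h, addOrderOf_dvd_iff_zsmul_eq_zero]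
  let φ : ℤ →+ zmultiples x :=
    (zmultiplesHom G x).codRestrict (zmultiples x) (zsmul_mem_zmultiples x)
  have hφ : Function.Surjective φ := by
    rintro ⟨_, k, rfl⟩
    exact ⟨k, rfl⟩
  let f := φ.liftOfSurjective hφ
    ⟨zmultiplesHom G y, fun k hk => (hker k).mp (congrArg Subtype.val hk)⟩
  refine ⟨f, (injective_iff_map_eq_zero f).mpr ?_, ?_⟩
  · intro z hz
    obtain ⟨k, rfl⟩ := hφ z
    have : k • y = 0 := by simpa [f] using hz
    exact Subtype.ext ((hker k).mpr this)
  · have hx : φ 1 = ⟨x, mem_zmultiples x⟩ := Subtype.ext (one_zsmul x)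
    rw [← hx]
    simp [f]

end

theorem stmt2_general {G : Type*} [AddCommGroup G] (p : ℕ) (hp : p.Prime)
    (B D : AddSubgroup G) (hBD : IsCompl B D) (n : ℕ)
    (hBbd : ∀ b ∈ B, p ^ n • b = 0) (hBexp : ∃ b ∈ B, p ^ (n - 1) • b ≠ 0)
    (hDdiv : ∀ d ∈ D, ∃ d' ∈ D, p • d' = d)
    (x b d : G) (hb : b ∈ B) (hd : d ∈ D) (hx : x = b + d)
    (e : ℕ) (he : addOrderOf x = p ^ e) (hen : n < e)
    (hP : InP (zmultiples x)) :
    addOrderOf b = p ^ n ∧ ∃ e' : ℕ, addOrderOf d = p ^ e' ∧ n < e' := by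
  subst hx
  have hbn : addOrderOf b ∣ p ^ n := addOrderOf_dvd_of_nsmul_eq_zero (hBbd b hb)
  have hde : addOrderOf d = p ^ e := Nat.eq_pow_of_lcm_eq_pow hp hbn hen
    (addOrderOf_add_eq_lcm_of_disjoint hBD.disjoint hb hd ▸ he)
  refine ⟨?_, e, hde, hen⟩
  obtain ⟨m, hmn, hbm⟩ := (Nat.dvd_prime_pow hp).mp hbn
  rcases hmn.eq_or_lt with rfl | hmn
  · exact hbm
  obtain ⟨b₀, hb₀, hb₀ne⟩ := hBexp
  have hsame : addOrderOf (b + d) = addOrderOf (b₀ + d) := by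
    rw [he, addOrderOf_add_eq_lcm_of_disjoint hBD.disjoint hb₀ hd, hde, Nat.lcm_eq_right
      ((addOrderOf_dvd_of_nsmul_eq_zero (hBbd b₀ hb₀)).trans (pow_dvd_pow p hen.le))]
  obtain ⟨f, hf, hfx⟩ := exists_injective_zmultiples_hom_apply_eq hsame
  obtain ⟨g, hg⟩ := hP f hf
  obtain ⟨d', -, rfl⟩ := exists_mem_pow_nsmul_eq hDdiv n d hd
  refine absurd (nsmul_eq_zero_of_map_add_nsmul_eq hBD hBbd hb₀ g ((hg _).trans hfx) ?_) hb₀ne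
  rw [← addOrderOf_dvd_iff_nsmul_eq_zero, hbm]
  exact pow_dvd_pow p (Nat.le_sub_one_of_lt hmn)

theorem stmt2 {G : Type*} [AddCommGroup G] (p : ℕ) (hp : p.Prime) (hG : IsPGrp p G)
    (B D : AddSubgroup G) (hBD : IsCompl B D) (n : ℕ) (hn : 0 < n)
    (hBbd : ∀ b ∈ B, p ^ n • b = 0) (hBexp : ∃ b ∈ B, p ^ (n - 1) • b ≠ 0)
    (hDdiv : ∀ d ∈ D, ∃ d' ∈ D, p • d' = d)
    (x b d : G) (hb : b ∈ B) (hd : d ∈ D) (hx : x = b + d)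
    (e : ℕ) (he : addOrderOf x = p ^ e) (hen : n < e)
    (hP : InP (zmultiples x)) :
    addOrderOf b = p ^ n ∧ ∃ e' : ℕ, addOrderOf d = p ^ e' ∧ n < e' :=
  stmt2_general p hp B D hBD n hBbd hBexp hDdiv x b d hb hd hx e he hen hP
end

section
/- Let G = B ⊕ D be an abelian p-group with B bounded of exponent n and D divisible. If x = b + d with b ∈ B, d ∈ D, exp(b) = n = exp(B), and exp(d) > n, then every homomorphism ⟨x⟩ → G extends to an endomorphism of G. -/
open AddSubgroup

/-! Split `f x = y_B + y_D` along `G = B ⊕ D`; it suffices to find endomorphisms of `B` and `D`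
sending `b ↦ y_B` and `d ↦ y_D`. Since `exp d > n`, the order of `d` is the order of `x`, which
kills `y_D`; as `D` is divisible, hence injective, `d ↦ y_D` extends from `⟨d⟩` to `D`. Since `b`
has maximal order `p ^ n` in `B`, the map `b ↦ 1 / p ^ n` into `ℚ/ℤ` extends to `B` and lands in
the cyclic `p ^ n`-torsion `⟨1 / p ^ n⟩` of `ℚ/ℤ`; composing with `1 / p ^ n ↦ y_B` gives the
endomorphism of `B`. -/

section Extension

variable {M N : Type*} [AddCommGroup M] [AddCommGroup N]

theorem exists_zmultiples_hom_apply_eq_s3 {a : M} {c : N} (hc : addOrderOf a • c = 0) :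
    ∃ ψ : zmultiples a →+ N, ψ ⟨a, mem_zmultiples a⟩ = c := by
  let f : ℤ →+ zmultiples a := zmultiplesHom _ ⟨a, mem_zmultiples a⟩
  have hf : Function.Surjective f := by
    rintro ⟨_, t, rfl⟩
    exact ⟨t, rfl⟩
  have hker : f.ker ≤ (zmultiplesHom N c).ker := by
    intro t ht
    obtain ⟨k, rfl⟩ := addOrderOf_dvd_iff_zsmul_eq_zero.mpr (congrArg Subtype.val ht)
    simp [mul_comm, mul_zsmul, hc]
  exact ⟨f.liftOfSurjective hf ⟨_, hker⟩, by
    simpa [f] using f.liftOfRightInverse_comp_apply _ (Function.rightInverse_surjInv hf) ⟨_, hker⟩ 1⟩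

theorem exists_hom_apply_eq_of_divisibleBy [DivisibleBy N ℤ] {a : M} {c : N}
    (hc : addOrderOf a • c = 0) : ∃ ψ : M →+ N, ψ a = c := by
  obtain ⟨ψ₀, hψ₀⟩ := exists_zmultiples_hom_apply_eq_s3 hc
  obtain ⟨ψ, hψ⟩ := (Module.Baer.of_divisible N).extension_property_addMonoidHom
    (zmultiples a).subtype Subtype.coe_injective ψ₀
  exact ⟨ψ, by rw [← hψ₀, ← hψ]; rfl⟩

theorem AddCircle.mem_zmultiples_of_nsmul_eq_zero {m : ℕ} (hm : 0 < m) {u : AddCircle (1 : ℚ)}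
    (hu : m • u = 0) : u ∈ zmultiples ((1 / m : ℚ) : AddCircle (1 : ℚ)) := by
  obtain ⟨k, -, rfl⟩ := (AddCircle.nsmul_eq_zero_iff hm).mp hu
  rw [AddCircle.natCast_div_mul_eq_nsmul]
  exact nsmul_mem (mem_zmultiples _) k

theorem exists_hom_apply_eq_of_addOrderOf_eq {m : ℕ} (hm : 0 < m) (hM : ∀ z : M, m • z = 0)
    {a : M} (ha : addOrderOf a = m) {c : N} (hc : m • c = 0) : ∃ φ : M →+ N, φ a = c := by
  set θ : AddCircle (1 : ℚ) := ((1 / m : ℚ) : AddCircle (1 : ℚ))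
  have hθ : addOrderOf θ = m := AddCircle.addOrderOf_period_div hm
  obtain ⟨χ, hχ⟩ := exists_hom_apply_eq_of_divisibleBy (a := a) (c := θ) (by
    rw [ha, ← hθ]; exact addOrderOf_nsmul_eq_zero θ)
  obtain ⟨ρ, hρ⟩ := exists_zmultiples_hom_apply_eq_s3 (a := θ) (c := c) (by rwa [hθ])
  have hχθ : ∀ z, χ z ∈ zmultiples θ := fun z =>
    AddCircle.mem_zmultiples_of_nsmul_eq_zero hm (by rw [← map_nsmul, hM, map_zero])
  exact ⟨ρ.comp (χ.codRestrict _ hχθ), (congrArg ρ (Subtype.ext hχ)).trans hρ⟩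

end Extension

theorem IsPGrp.surjective_nsmul {A : Type*} [AddCommGroup A] {p : ℕ} (hA : IsPGrp p A)
    (hp : p.Prime) (hdiv : ∀ a : A, ∃ a', p • a' = a) {m : ℕ} (hm : m ≠ 0) :
    Function.Surjective (fun a : A => m • a) := by
  induction m using Nat.strong_induction_on with
  | _ m ih =>
  intro a
  by_cases hpm : p ∣ m
  · obtain ⟨k, rfl⟩ := hpm
    have hk : k ≠ 0 := right_ne_zero_of_mul hm
    obtain ⟨w, rfl⟩ := ih k (lt_mul_left (Nat.pos_of_ne_zero hk) hp.one_lt) hk a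
    obtain ⟨w', rfl⟩ := hdiv w
    exact ⟨w', by dsimp only; rw [smul_smul, mul_comm]⟩
  · obtain ⟨t, ht⟩ := hA a
    have hcop : IsCoprime (m : ℤ) ((p ^ t : ℕ) : ℤ) :=
      Nat.isCoprime_iff_coprime.mpr ((hp.coprime_iff_not_dvd.mpr hpm).symm.pow_right t)
    obtain ⟨u, v, huv⟩ := hcop
    refine ⟨u • a, ?_⟩
    calc m • u • a = (u * m + v * (p ^ t : ℕ)) • a - v • (p ^ t • a) := by
          simp only [add_smul, mul_comm u, mul_zsmul, natCast_zsmul]; abel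
      _ = a := by rw [huv, ht]; simp

noncomputable abbrev IsPGrp.divisibleByInt {A : Type*} [AddCommGroup A] {p : ℕ} (hA : IsPGrp p A)
    (hp : p.Prime) (hdiv : ∀ a : A, ∃ a', p • a' = a) : DivisibleBy A ℤ :=
  letI := divisibleByOfSMulRightSurj A ℕ fun hm => hA.surjective_nsmul hp hdiv hm
  AddGroup.divisibleByIntOfDivisibleByNat A

theorem exists_hom_apply_add_of_isCompl {G H : Type*} [AddCommGroup G] [AddCommGroup H]
    {B D : AddSubgroup G} (hBD : IsCompl B D) (φ : B →+ H) (ψ : D →+ H) :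
    ∃ g : G →+ H, ∀ (b : B) (d : D), g (b + d) = φ b + ψ d := by
  have h := toIntSubmodule.isCompl hBD
  refine ⟨(LinearMap.ofIsCompl h φ.toIntLinearMap ψ.toIntLinearMap).toAddMonoidHom, fun b d => ?_⟩
  have hb := LinearMap.ofIsCompl_apply_left h (φ := φ.toIntLinearMap) (ψ := ψ.toIntLinearMap) b
  have hd := LinearMap.ofIsCompl_apply_right h (φ := φ.toIntLinearMap) (ψ := ψ.toIntLinearMap) d
  rw [LinearMap.toAddMonoidHom_coe, map_add]
  exact congrArg₂ (· + ·) hb hd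

theorem inQ_zmultiples_of_forall {G : Type*} [AddCommGroup G] {x : G}
    (h : ∀ y : G, addOrderOf x • y = 0 → ∃ g : G →+ G, g x = y) : InQ (zmultiples x) := by
  intro f
  obtain ⟨g, hg⟩ := h (f ⟨x, mem_zmultiples x⟩) (by
    rw [← map_nsmul]; convert map_zero f; exact Subtype.ext (addOrderOf_nsmul_eq_zero x))
  refine ⟨g, ?_⟩
  rintro ⟨_, t, rfl⟩
  rw [map_zsmul, hg, ← map_zsmul]
  rfl

theorem stmt3_general {G : Type*} [AddCommGroup G] (p : ℕ) (hp : p.Prime) (hG : IsPGrp p G)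
    (B D : AddSubgroup G) (hBD : IsCompl B D) (n : ℕ)
    (hBbd : ∀ b ∈ B, p ^ n • b = 0)
    (hDdiv : ∀ d ∈ D, ∃ d' ∈ D, p • d' = d)
    (x b d : G) (hb : b ∈ B) (hd : d ∈ D) (hx : x = b + d)
    (hob : addOrderOf b = p ^ n)
    (e' : ℕ) (hod : addOrderOf d = p ^ e') (he' : n < e') :
    InQ (zmultiples x) := by
  have hBe : ∀ z ∈ B, p ^ e' • z = 0 := fun z hz => by
    rw [← Nat.pow_sub_mul_pow p he'.le, mul_comm, mul_nsmul, hBbd z hz, smul_zero]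
  refine inQ_zmultiples_of_forall fun y hy => ?_
  have hxe : p ^ e' • x = 0 := by
    rw [hx, smul_add, hBe b hb, ← hod, addOrderOf_nsmul_eq_zero, add_zero]
  have hye : p ^ e' • y = 0 := by
    obtain ⟨k, hk⟩ := addOrderOf_dvd_iff_nsmul_eq_zero.mpr hxe
    rw [hk, mul_nsmul, hy, smul_zero]
  obtain ⟨yB, hyB, yD, hyD, rfl⟩ := mem_sup.mp (hBD.sup_eq_top ▸ mem_top y)
  obtain ⟨φ, hφ⟩ := exists_hom_apply_eq_of_addOrderOf_eq (M := B) (a := ⟨b, hb⟩)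
    (c := (⟨yB, hyB⟩ : B)) (pow_pos hp.pos n) (fun z => Subtype.ext (hBbd z z.2))
    (by rw [AddSubgroup.addOrderOf_mk, hob]) (Subtype.ext (hBbd yB hyB))
  have hDp : IsPGrp p D := fun z => (hG z).imp fun _ ht => Subtype.ext ht
  let _ : DivisibleBy D ℤ := hDp.divisibleByInt hp
    fun z => (hDdiv z z.2).elim fun w hw => ⟨⟨w, hw.1⟩, Subtype.ext hw.2⟩
  have hyDe : p ^ e' • yD = 0 := by simpa [smul_add, hBe yB hyB] using hye
  obtain ⟨ψ, hψ⟩ := exists_hom_apply_eq_of_divisibleBy (a := (⟨d, hd⟩ : D)) (c := (⟨yD, hyD⟩ : D))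
    (by rw [AddSubgroup.addOrderOf_mk, hod]; exact Subtype.ext hyDe)
  obtain ⟨g, hg⟩ := exists_hom_apply_add_of_isCompl hBD (B.subtype.comp φ) (D.subtype.comp ψ)
  exact ⟨g, by simpa [hφ, hψ, ← hx] using hg ⟨b, hb⟩ ⟨d, hd⟩⟩

theorem stmt3 {G : Type*} [AddCommGroup G] (p : ℕ) (hp : p.Prime) (hG : IsPGrp p G)
    (B D : AddSubgroup G) (hBD : IsCompl B D) (n : ℕ) (hn : 0 < n)
    (hBbd : ∀ b ∈ B, p ^ n • b = 0) (hBexp : ∃ b ∈ B, p ^ (n - 1) • b ≠ 0)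
    (hDdiv : ∀ d ∈ D, ∃ d' ∈ D, p • d' = d)
    (x b d : G) (hb : b ∈ B) (hd : d ∈ D) (hx : x = b + d)
    (hob : addOrderOf b = p ^ n)
    (e' : ℕ) (hod : addOrderOf d = p ^ e') (he' : n < e') :
    InQ (zmultiples x) :=
  stmt3_general p hp hG B D hBD n hBbd hDdiv x b d hb hd hx hob e' hod he'
end

section
/- Let G be an abelian p-group and x ∈ G with ⟨x⟩ ∩ G¹ = 0, where G¹ = ⋂ₙ pⁿG. Then every homomorphism f: ⟨x⟩ → G extends to an endomorphism of G if and only if for every y ∈ G with exp(y) ≤ exp(x), one has h(pᵏx) ≤ h(pᵏy) for all k ≥ 0 (i.e., the Ulm sequence of x is ≤ that of y). -/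
open AddSubgroup

/-!
Heights never decrease under homomorphisms, which gives the forward direction. Conversely, let
`y` have exponent at most that of `x` and `U(x) ≤ U(y)`; we find `φ ∈ End G` with `φ x = y` by
induction on the exponent `n` of `x`. By induction some `φ` sends `p x` to `p y`, so the error
`d = y - φ x` satisfies `p d = 0` and `h(d) ≥ h(x) = h`, which is finite because
`⟨x⟩ ∩ G¹ = 0`. Write `d = pʰ g`, so `pʰ⁺¹ g = 0`. As `x ∉ pʰ⁺¹G`, injectivity of `ℚ/ℤ` gives a
character of `G/pʰ⁺¹G` sending `x` to `1/p`; its values lie in the cyclic group generated by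
`1/pʰ⁺¹`, and following it by `1/pʰ⁺¹ ↦ g` gives `ψ` with `ψ x = d`. Then `φ + ψ` sends `x` to `y`.
-/

open scoped Pointwise

section Heights

variable {G : Type*} [AddCommGroup G] {p : ℕ}

lemma mem_pow_smul_top_iff {M : ℕ} {z : G} :
    z ∈ p ^ M • (⊤ : AddSubgroup G) ↔ ∃ y : G, p ^ M • y = z := by
  simp [mem_smul_pointwise_iff_exists]

lemma le_pHeight_iff {M : ℕ} {z : G} :
    (M : ℕ∞) ≤ pHeight p z ↔ z ∈ p ^ M • (⊤ : AddSubgroup G) := by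
  rw [mem_pow_smul_top_iff]
  refine ⟨fun hM => ?_, fun ⟨y, hy⟩ => le_sSup ⟨M, rfl, y, hy⟩⟩
  by_contra hz
  have hM0 : M ≠ 0 := by rintro rfl; exact hz ⟨z, one_smul ℕ z⟩
  have hle : pHeight p z ≤ (M - 1 : ℕ) := by
    refine sSup_le ?_
    rintro _ ⟨m, rfl, y, rfl⟩
    refine Nat.cast_le.mpr (Nat.le_sub_one_of_lt (lt_of_not_ge fun hMm => hz ?_))
    exact ⟨p ^ (m - M) • y, by rw [smul_smul, ← pow_add, Nat.add_sub_cancel' hMm]⟩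
  exact absurd (hM.trans hle) (by norm_cast; omega)

lemma pHeight_eq_top_iff {z : G} : pHeight p z = ⊤ ↔ ∀ m : ℕ, ∃ y : G, p ^ m • y = z := by
  simp only [ENat.eq_top_iff_forall_ge, le_pHeight_iff, mem_pow_smul_top_iff]

lemma pHeight_le_pHeight_map {H : Type*} [AddCommGroup H] (φ : G →+ H) (z : G) :
    pHeight p z ≤ pHeight p (φ z) :=
  sSup_le fun _ ⟨m, hm, y, hy⟩ => le_sSup ⟨m, hm, φ y, by rw [← map_nsmul, hy]⟩

end Heights

lemma exists_zmultiples_addMonoidHom_apply_eq {A B : Type*} [AddCommGroup A] [AddCommGroup B]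
    (a : A) (b : B) (h : addOrderOf a • b = 0) :
    ∃ f : zmultiples a →+ B, f ⟨a, mem_zmultiples a⟩ = b := by
  set φ := zmultiplesHom A a
  have hker : φ.ker ≤ (zmultiplesHom B b).ker := by
    rw [zmultiplesHom_ker_eq, zmultiples_le, AddMonoidHom.mem_ker, zmultiplesHom_apply,
      natCast_zsmul, h]
  let e : zmultiples a ≃+ ℤ ⧸ φ.ker :=
    (AddEquiv.addSubgroupCongr (range_zmultiplesHom a).symm).trans
      (QuotientAddGroup.quotientKerEquivRange φ).symm
  have he : e ⟨a, mem_zmultiples a⟩ = ((1 : ℤ) : ℤ ⧸ φ.ker) := by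
    rw [AddEquiv.trans_apply, AddEquiv.symm_apply_eq]
    exact Subtype.ext (one_zsmul a).symm
  refine ⟨(QuotientAddGroup.lift _ _ hker).comp e.toAddMonoidHom, ?_⟩
  rw [AddMonoidHom.comp_apply, AddEquiv.coe_toAddMonoidHom, he, QuotientAddGroup.lift_mk,
    zmultiplesHom_apply, one_zsmul]

lemma exists_addMonoidHom_apply_eq_of_divisibleBy {A D : Type*} [AddCommGroup A]
    [AddCommGroup D] [DivisibleBy D ℤ] (a : A) (d : D) (h : addOrderOf a • d = 0) :
    ∃ χ : A →+ D, χ a = d := by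
  obtain ⟨f, hf⟩ := exists_zmultiples_addMonoidHom_apply_eq a d h
  obtain ⟨χ, hχ⟩ := Module.Baer.extension_property_addMonoidHom (Module.Baer.of_divisible D)
    (zmultiples a).subtype Subtype.val_injective f
  exact ⟨χ, by rw [← hf, ← hχ]; rfl⟩

lemma inQ_zmultiples_iff {G : Type*} [AddCommGroup G] (x : G) :
    InQ (zmultiples x) ↔ ∀ y : G, addOrderOf x • y = 0 → ∃ φ : G →+ G, φ x = y := by
  constructor
  · intro hQ y hy
    obtain ⟨f, hf⟩ := exists_zmultiples_addMonoidHom_apply_eq x y hy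
    obtain ⟨φ, hφ⟩ := hQ f
    exact ⟨φ, (hφ _).trans hf⟩
  · intro hext f
    obtain ⟨φ, hφ⟩ := hext (f ⟨x, mem_zmultiples x⟩) (by
      rw [← map_nsmul, ← map_zero f]
      exact congrArg f (Subtype.ext (addOrderOf_nsmul_eq_zero x)))
    refine ⟨φ, fun z => ?_⟩
    obtain ⟨c, hc⟩ := mem_zmultiples_iff.mp z.2
    rw [show z = c • ⟨x, mem_zmultiples x⟩ from Subtype.ext hc.symm, map_zsmul,
      AddSubgroup.coe_zsmul, map_zsmul, hφ]

lemma AddCircle.mem_zmultiples_one_div_of_nsmul_eq_zero {n : ℕ} (hn : 0 < n)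
    {u : AddCircle (1 : ℚ)} (hu : n • u = 0) :
    u ∈ zmultiples ((1 / n : ℚ) : AddCircle (1 : ℚ)) := by
  obtain ⟨r, rfl⟩ := QuotientAddGroup.mk_surjective u
  rw [← QuotientAddGroup.mk_nsmul, AddCircle.coe_eq_zero_iff] at hu
  obtain ⟨m, hm⟩ := hu
  refine ⟨m, ?_⟩
  change m • ((1 / n : ℚ) : AddCircle (1 : ℚ)) = r
  rw [← QuotientAddGroup.mk_zsmul]
  congr 1
  rw [zsmul_eq_mul, mul_one, nsmul_eq_mul] at hm
  rw [zsmul_eq_mul, hm]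
  field_simp

section Endomorphisms

variable {G : Type*} [AddCommGroup G] {p : ℕ}

theorem exists_addMonoidHom_apply_eq_pow_smul (hp : p.Prime) {x g : G} {h : ℕ}
    (hx : x ∉ p ^ (h + 1) • (⊤ : AddSubgroup G)) (hg : p ^ (h + 1) • g = 0) :
    ∃ ψ : G →+ G, ψ x = p ^ h • g := by
  set S := p ^ (h + 1) • (⊤ : AddSubgroup G)
  have hpos : 0 < p ^ (h + 1) := pow_pos hp.pos _
  set q : AddCircle (1 : ℚ) := ((1 / (p ^ (h + 1) : ℕ) : ℚ) : AddCircle (1 : ℚ))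
  have hq : addOrderOf q = p ^ (h + 1) := AddCircle.addOrderOf_period_div hpos
  have hxS : (x : G ⧸ S) ≠ 0 := by rwa [Ne, QuotientAddGroup.eq_zero_iff]
  have hS : ∀ z : G, p ^ (h + 1) • (z : G ⧸ S) = 0 := fun z => by
    rw [← QuotientAddGroup.mk_nsmul, QuotientAddGroup.eq_zero_iff, mem_pow_smul_top_iff]
    exact ⟨z, rfl⟩
  obtain ⟨k, -, hk⟩ := (Nat.dvd_prime_pow hp).mp (addOrderOf_dvd_of_nsmul_eq_zero (hS x))
  have hk0 : k ≠ 0 := by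
    rintro rfl
    exact hxS (AddMonoid.addOrderOf_eq_one_iff.mp (by rw [hk, pow_zero]))
  obtain ⟨χ, hχ⟩ := exists_addMonoidHom_apply_eq_of_divisibleBy (x : G ⧸ S) (p ^ h • q) (by
    rw [hk, smul_smul, ← pow_add]
    exact (addOrderOf_dvd_iff_nsmul_eq_zero).mp (hq ▸ pow_dvd_pow p (by omega)))
  let χ' : G →+ AddCircle (1 : ℚ) := χ.comp (QuotientAddGroup.mk' S)
  have hχ' : ∀ z, χ' z ∈ zmultiples q := fun z =>
    AddCircle.mem_zmultiples_one_div_of_nsmul_eq_zero hpos (by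
      rw [AddMonoidHom.comp_apply, ← map_nsmul, QuotientAddGroup.mk'_apply, hS, map_zero])
  obtain ⟨ρ, hρ⟩ := exists_zmultiples_addMonoidHom_apply_eq q g (by rw [hq, hg])
  refine ⟨ρ.comp (χ'.codRestrict _ hχ'), ?_⟩
  have : χ'.codRestrict _ hχ' x = p ^ h • ⟨q, mem_zmultiples q⟩ := Subtype.ext hχ
  rw [AddMonoidHom.comp_apply, this, map_nsmul, hρ]

theorem exists_addMonoidHom_apply_eq_of_pHeight_le (hp : p.Prime) {n : ℕ} {x y : G}
    (hx : p ^ n • x = 0) (hy : p ^ n • y = 0) (hfin : ∀ k < n, pHeight p (p ^ k • x) ≠ ⊤)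
    (hle : ∀ k, pHeight p (p ^ k • x) ≤ pHeight p (p ^ k • y)) :
    ∃ φ : G →+ G, φ x = y := by
  induction n generalizing x y with
  | zero =>
    rw [pow_zero, one_smul] at hx hy
    exact ⟨0, by rw [hx, hy, map_zero]⟩
  | succ n ih =>
    have hpow (z : G) (k : ℕ) : p ^ k • p • z = p ^ (k + 1) • z := by rw [smul_smul, ← pow_succ]
    obtain ⟨φ, hφ⟩ := ih (x := p • x) (y := p • y) (by rwa [hpow]) (by rwa [hpow])
      (fun k hk => by rw [hpow]; exact hfin (k + 1) (by omega))
      (fun k => by simpa only [hpow] using hle (k + 1))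
    obtain ⟨h, hh⟩ := ENat.ne_top_iff_exists.mp (hfin 0 n.succ_pos)
    rw [pow_zero, one_smul] at hh
    have hxh : x ∉ p ^ (h + 1) • (⊤ : AddSubgroup G) := by
      rw [← le_pHeight_iff, ← hh]; norm_cast; omega
    obtain ⟨g, hg⟩ : ∃ g : G, p ^ h • g = y - φ x := by
      have hyh : (h : ℕ∞) ≤ pHeight p y := by simpa only [pow_zero, one_smul, hh] using hle 0
      have hφxh : (h : ℕ∞) ≤ pHeight p (φ x) := hh ▸ pHeight_le_pHeight_map φ x
      exact mem_pow_smul_top_iff.mp (sub_mem (le_pHeight_iff.mp hyh) (le_pHeight_iff.mp hφxh))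
    obtain ⟨ψ, hψ⟩ := exists_addMonoidHom_apply_eq_pow_smul hp hxh (by
      rw [pow_succ', mul_smul, hg, smul_sub, ← map_nsmul, hφ, sub_self])
    exact ⟨φ + ψ, by rw [AddMonoidHom.add_apply, hψ, hg, add_sub_cancel]⟩

end Endomorphisms

theorem stmt4_general {G : Type*} [AddCommGroup G] (p : ℕ) (hp : p.Prime)
    (x : G) (n : ℕ) (hx : addOrderOf x = p ^ n)
    (hU : ∀ z ∈ zmultiples x, (∀ m : ℕ, ∃ y : G, p ^ m • y = z) → z = 0) :
    InQ (zmultiples x) ↔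
      ∀ (y : G) (m : ℕ), addOrderOf y = p ^ m → m ≤ n →
        ∀ k : ℕ, pHeight p (p ^ k • x) ≤ pHeight p (p ^ k • y) := by
  have hxn : p ^ n • x = 0 := hx ▸ addOrderOf_nsmul_eq_zero x
  rw [inQ_zmultiples_iff, hx]
  constructor
  · intro hext y m hy hmn k
    obtain ⟨φ, hφ⟩ := hext y (addOrderOf_dvd_iff_nsmul_eq_zero.mp (hy ▸ pow_dvd_pow p hmn))
    simpa only [map_nsmul, hφ] using pHeight_le_pHeight_map φ (p ^ k • x)
  · intro hUlm y hyn
    obtain ⟨m, hmn, hm⟩ := (Nat.dvd_prime_pow hp).mp (addOrderOf_dvd_of_nsmul_eq_zero hyn)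
    have hfin : ∀ k < n, pHeight p (p ^ k • x) ≠ ⊤ := fun k hk htop =>
      nsmul_ne_zero_of_lt_addOrderOf (pow_pos hp.pos k).ne' (hx ▸ Nat.pow_lt_pow_right hp.one_lt hk)
        (hU _ (nsmul_mem (mem_zmultiples x) _) (pHeight_eq_top_iff.mp htop))
    exact exists_addMonoidHom_apply_eq_of_pHeight_le hp hxn hyn hfin (hUlm y m hm hmn)

theorem stmt4 {G : Type*} [AddCommGroup G] (p : ℕ) (hp : p.Prime) (hG : IsPGrp p G)
    (x : G) (n : ℕ) (hx : addOrderOf x = p ^ n)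
    (hU : ∀ z ∈ zmultiples x, (∀ m : ℕ, ∃ y : G, p ^ m • y = z) → z = 0) :
    InQ (zmultiples x) ↔
      ∀ (y : G) (m : ℕ), addOrderOf y = p ^ m → m ≤ n →
        ∀ k : ℕ, pHeight p (p ^ k • x) ≤ pHeight p (p ^ k • y) :=
  stmt4_general p hp x n hx hU
end

section
/- Let G be an abelian p-group and x ∈ G of exponent n with ⟨x⟩ ∩ G¹ = 0, such that the Ulm sequence U(x) has exactly one non-trivial gap, occurring before index k, with h(pᵏx) = k + ℓ. If G has a cyclic direct summand of exponent e with k + 1 ≤ e ≤ n + ℓ − 1, then ⟨x⟩ is not in P(G) (some monomorphism ⟨x⟩ → G fails to extend). -/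
open AddSubgroup

/-- Key characterization: height at least `m` iff divisible by `p ^ m`. -/
lemma pHeight_le_iff {G : Type*} [AddCommGroup G] (p : ℕ) {m : ℕ} {w : G} :
    (m : ℕ∞) ≤ pHeight p w ↔ ∃ y : G, p ^ m • y = w := by
  constructor
  · intro h
    by_contra hno
    push_neg at hno
    rcases Nat.eq_zero_or_pos m with hm | hm
    · exact hno w (by simp [hm])
    have hub : pHeight p w ≤ ((m - 1 : ℕ) : ℕ∞) := by
      apply sSup_le
      rintro a ⟨m', rfl, y, hy⟩
      have hm' : m' < m := by
        by_contra hge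
        push_neg at hge
        refine hno (p ^ (m' - m) • y) ?_
        rw [smul_smul, ← pow_add, Nat.add_sub_cancel' hge, hy]
      exact_mod_cast Nat.le_sub_one_of_lt hm'
    have h2 : (m : ℕ∞) ≤ ((m - 1 : ℕ) : ℕ∞) := h.trans hub
    have : m ≤ m - 1 := by exact_mod_cast h2
    omega
  · rintro ⟨y, hy⟩
    exact le_sSup ⟨m, rfl, y, hy⟩

/-- Heights do not decrease under endomorphisms. -/
lemma pHeight_le_map {G : Type*} [AddCommGroup G] (p : ℕ) (g : G →+ G) (w : G) :
    pHeight p w ≤ pHeight p (g w) := by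
  apply sSup_le_sSup
  rintro a ⟨m, rfl, y, hy⟩
  exact ⟨m, rfl, g y, by rw [← map_nsmul, hy]⟩

/-- The generator of a cyclic direct summand of exponent `e` has height exactly `m`
at `p ^ m • z` for `m < e`; here the upper bound. -/
lemma pHeight_summand_le {G : Type*} [AddCommGroup G] {p : ℕ} (hp : p.Prime)
    {z : G} {e : ℕ} (hz : addOrderOf z = p ^ e)
    {C : AddSubgroup G} (hC : IsCompl (zmultiples z) C)
    {m : ℕ} (hm : m < e) : pHeight p (p ^ m • z) ≤ (m : ℕ∞) := by
  by_contra hlt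
  push_neg at hlt
  have h1 : ((m + 1 : ℕ) : ℕ∞) ≤ pHeight p (p ^ m • z) := by
    push_cast
    exact ENat.add_one_le_iff (by simp) |>.mpr hlt
  obtain ⟨w, hw⟩ := (pHeight_le_iff p).mp h1
  have hC' : IsCompl (AddSubgroup.toIntSubmodule (zmultiples z))
      (AddSubgroup.toIntSubmodule C) := AddSubgroup.toIntSubmodule.isCompl hC
  set P := AddSubgroup.toIntSubmodule (zmultiples z)
  let π := Submodule.linearProjOfIsCompl P (AddSubgroup.toIntSubmodule C) hC'
  have hzP : z ∈ P := mem_zmultiples z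
  have hπz : π z = ⟨z, hzP⟩ := Submodule.linearProjOfIsCompl_apply_left hC' ⟨z, hzP⟩
  obtain ⟨c, hc⟩ := mem_zmultiples_iff.mp (π w).2
  have hkey : p ^ (m + 1) • (c • z) = p ^ m • z := by
    have := congrArg (fun v => ((π v : P) : G)) hw
    simp only [map_nsmul, hπz] at this
    rw [hc]
    simpa using this
  have hzero : ((p : ℤ) ^ (m + 1) * c - (p : ℤ) ^ m) • z = 0 := by
    rw [sub_smul, sub_eq_zero, mul_smul]
    have e1 : ((p : ℤ)) ^ (m + 1) = ((p ^ (m + 1) : ℕ) : ℤ) := by push_cast; ring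
    have e2 : ((p : ℤ)) ^ m = ((p ^ m : ℕ) : ℤ) := by push_cast; ring
    rw [e1, e2, natCast_zsmul, natCast_zsmul]
    exact hkey
  have hdvd : ((p : ℤ) ^ e) ∣ ((p : ℤ) ^ (m + 1) * c - (p : ℤ) ^ m) := by
    have h := (addOrderOf_dvd_iff_zsmul_eq_zero).mpr hzero
    rw [hz] at h
    exact_mod_cast h
  have hdvd2 : ((p : ℤ) ^ e) ∣ (p : ℤ) ^ m * ((p : ℤ) * c - 1) := by
    have h : (p : ℤ) ^ (m + 1) * c - (p : ℤ) ^ m = (p : ℤ) ^ m * ((p : ℤ) * c - 1) := by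
      ring
    rwa [h] at hdvd
  have hcp : IsCoprime (p : ℤ) ((p : ℤ) * c - 1) := ⟨c, -1, by ring⟩
  have hcop : IsCoprime ((p : ℤ) ^ e) ((p : ℤ) * c - 1) := hcp.pow_left
  have hdvd3 : ((p : ℤ) ^ e) ∣ (p : ℤ) ^ m := hcop.dvd_of_dvd_mul_right hdvd2
  have h4 : p ^ e ∣ p ^ m := by exact_mod_cast hdvd3
  have := (Nat.pow_dvd_pow_iff_le_right hp.one_lt).mp h4
  omega

theorem stmt7 {G : Type*} [AddCommGroup G] (p : ℕ) (hp : p.Prime) (hG : IsPGrp p G)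
    (x : G) (n : ℕ) (hx : addOrderOf x = p ^ n)
    (hU : ∀ z ∈ zmultiples x, (∀ m : ℕ, ∃ y : G, p ^ m • y = z) → z = 0)
    (k ℓ : ℕ) (hk : k < n) (hℓ : 0 < ℓ)
    (hgap : HasGapBefore p x k) (huniq : ∀ j < n, HasGapBefore p x j → j = k)
    (hht : pHeight p (p ^ k • x) = ((k + ℓ : ℕ) : ℕ∞))
    (e : ℕ) (he1 : k + 1 ≤ e) (he2 : e ≤ n + ℓ - 1)
    (z : G) (hz : addOrderOf z = p ^ e)
    (hzsummand : ∃ C : AddSubgroup G, IsCompl (zmultiples z) C) :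
    ¬ InP (zmultiples x) := by
  intro hP
  have hn1 : 1 ≤ n := by omega
  set s : ℕ := e - n with hs
  set j : ℕ := e - 1 - s with hj
  have hsℓ : s < ℓ := by omega
  have hjk : k ≤ j := by omega
  have hjse : j + s < e := by omega
  have hpx : p ^ n • x = 0 := by rw [← hx]; exact addOrderOf_nsmul_eq_zero x
  have hpz : ∀ m : ℕ, e ≤ m → p ^ m • z = 0 := by
    intro m hm
    apply addOrderOf_dvd_iff_nsmul_eq_zero.mp
    rw [hz]; exact pow_dvd_pow p hm
  have hxn1 : p ^ (n - 1) • x ≠ 0 := by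
    intro h0
    have h1 : addOrderOf x ∣ p ^ (n - 1) := addOrderOf_dvd_iff_nsmul_eq_zero.mpr h0
    rw [hx] at h1
    have := (Nat.pow_dvd_pow_iff_le_right hp.one_lt).mp h1
    omega
  -- lower bound on heights of `p ^ i • x` for `i ≥ k`
  have hxlow : ∀ i : ℕ, k ≤ i → ((i + ℓ : ℕ) : ℕ∞) ≤ pHeight p (p ^ i • x) := by
    intro i hi
    obtain ⟨y0, hy0⟩ := (pHeight_le_iff p).mp hht.ge
    refine (pHeight_le_iff p).mpr ⟨y0, ?_⟩
    have h1 : i + ℓ = (i - k) + (k + ℓ) := by omega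
    rw [h1, pow_add, mul_smul, hy0, smul_smul, ← pow_add]
    have h2 : i - k + k = i := by omega
    rw [h2]
  obtain ⟨C, hC⟩ := hzsummand
  have hzup : ∀ m : ℕ, m < e → pHeight p (p ^ m • z) ≤ (m : ℕ∞) :=
    fun m hm => pHeight_summand_le hp hz hC hm
  -- the perturbed generator
  set y : G := x + p ^ s • z with hydef
  have hyj : ∀ i : ℕ, p ^ i • y = p ^ i • x + p ^ (i + s) • z := by
    intro i; rw [hydef, smul_add, smul_smul, ← pow_add]
  have hpny : p ^ n • y = 0 := by
    rw [hyj, hpx, zero_add]; exact hpz _ (by omega)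
  have hyn1 : p ^ (n - 1) • y ≠ 0 := by
    rw [hyj]
    rcases le_or_gt e (n - 1 + s) with hcase | hcase
    · rw [hpz _ hcase, add_zero]; exact hxn1
    · intro h0
      have hxe : p ^ (n - 1) • x = -(p ^ (n - 1 + s) • z) :=
        eq_neg_of_add_eq_zero_left h0
      have hlow := hxlow (n - 1) (by omega)
      have h2 : ((n - 1 + s + 1 : ℕ) : ℕ∞) ≤ pHeight p (p ^ (n - 1) • x) :=
        le_trans (by exact_mod_cast (by omega : n - 1 + s + 1 ≤ n - 1 + ℓ)) hlow
      obtain ⟨w, hw⟩ := (pHeight_le_iff p).mp h2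
      have h3 : p ^ (n - 1 + s + 1) • (-w) = p ^ (n - 1 + s) • z := by
        rw [smul_neg, hw, hxe, neg_neg]
      have h4 : ((n - 1 + s + 1 : ℕ) : ℕ∞) ≤ pHeight p (p ^ (n - 1 + s) • z) :=
        (pHeight_le_iff p).mpr ⟨-w, h3⟩
      have h5 := h4.trans (hzup _ hcase)
      have : n - 1 + s + 1 ≤ n - 1 + s := by exact_mod_cast h5
      omega
  have hordy : addOrderOf y = p ^ n := by
    have hdvd : addOrderOf y ∣ p ^ n := addOrderOf_dvd_iff_nsmul_eq_zero.mpr hpny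
    obtain ⟨i, hi, hiy⟩ := (Nat.dvd_prime_pow hp).mp hdvd
    rcases Nat.lt_or_ge i n with hilt | hige
    · exfalso
      apply hyn1
      apply addOrderOf_dvd_iff_nsmul_eq_zero.mp
      rw [hiy]; exact pow_dvd_pow p (by omega)
    · rw [hiy, le_antisymm hi hige]
  -- the coefficient congruence
  have hxz : ∀ c d : ℤ, c • x = d • x → c • y = d • y := by
    intro c d hcd
    have h1 : (c - d) • x = 0 := by rw [sub_smul, hcd, sub_self]
    have h2 : ((p ^ n : ℕ) : ℤ) ∣ (c - d) := by
      rw [← hx]; exact addOrderOf_dvd_iff_zsmul_eq_zero.mpr h1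
    obtain ⟨t, ht⟩ := h2
    have h3 : (c - d) • y = 0 := by
      rw [ht, mul_comm, mul_smul, natCast_zsmul, hpny, smul_zero]
    rw [sub_smul, sub_eq_zero] at h3
    exact h3
  -- the monomorphism sending `x` to `y`
  choose cc hcc using fun u : ↥(zmultiples x) => mem_zmultiples_iff.mp u.2
  let f : ↥(zmultiples x) →+ G := AddMonoidHom.mk' (fun u => cc u • y) (by
    intro u v
    rw [← add_smul]
    apply hxz
    rw [add_smul, hcc, hcc, hcc]
    rfl)
  have hfinj : Function.Injective f := by
    intro u v huv
    have h1 : cc u • y = cc v • y := huv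
    have h2 : (cc u - cc v) • y = 0 := by rw [sub_smul, h1, sub_self]
    have h3 : ((p ^ n : ℕ) : ℤ) ∣ (cc u - cc v) := by
      rw [← hordy]; exact addOrderOf_dvd_iff_zsmul_eq_zero.mpr h2
    obtain ⟨t, ht⟩ := h3
    have h4 : (cc u - cc v) • x = 0 := by
      rw [ht, mul_comm, mul_smul, natCast_zsmul, hpx, smul_zero]
    rw [sub_smul, sub_eq_zero, hcc, hcc] at h4
    exact Subtype.coe_injective h4
  obtain ⟨g, hg⟩ := hP f hfinj
  have hmemx : x ∈ zmultiples x := mem_zmultiples x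
  have hgx : g x = y := by
    have h1 := hg ⟨x, hmemx⟩
    have h2 : f ⟨x, hmemx⟩ = y := by
      show cc ⟨x, hmemx⟩ • y = y
      have h3 := hxz (cc ⟨x, hmemx⟩) 1 (by rw [hcc, one_smul])
      rwa [one_smul] at h3
    rw [h2] at h1
    exact h1
  -- final height contradiction at index `j`
  have h1 : ((j + s + 1 : ℕ) : ℕ∞) ≤ pHeight p (p ^ j • x) :=
    le_trans (by exact_mod_cast (by omega : j + s + 1 ≤ j + ℓ)) (hxlow j hjk)
  have h2 : ((j + s + 1 : ℕ) : ℕ∞) ≤ pHeight p (p ^ j • y) := by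
    refine h1.trans ?_
    have h3 := pHeight_le_map p g (p ^ j • x)
    rwa [map_nsmul, hgx] at h3
  obtain ⟨w, hw⟩ := (pHeight_le_iff p).mp h2
  obtain ⟨w', hw'⟩ := (pHeight_le_iff p).mp h1
  have h5 : p ^ (j + s + 1) • (w - w') = p ^ (j + s) • z := by
    rw [smul_sub, hw, hw', hyj, add_sub_cancel_left]
  have h6 : ((j + s + 1 : ℕ) : ℕ∞) ≤ pHeight p (p ^ (j + s) • z) :=
    (pHeight_le_iff p).mpr ⟨w - w', h5⟩
  have h7 := h6.trans (hzup _ hjse)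
  have : j + s + 1 ≤ j + s := by exact_mod_cast h7
  omega
end

section
/- Let G be an abelian p-group, and K, L subgroups of G with K ∩ L = 0 such that every homomorphism from K ⊕ L into G that maps K ⊕ L into itself extends to an endomorphism of G (i.e., K ⊕ L ∈ W(G)). Then K ⊕ L is a valuated direct sum: for all k ∈ K and ℓ ∈ L, h(k + ℓ) = min(h(k), h(ℓ)), where h is the p-height in G. -/
open AddSubgroup

/-!
Since `K ∩ L = 0`, the projection `k + l ↦ k` is an endomorphism of `K ⊕ L`; as
`K ⊕ L ∈ W(G)` it extends to an endomorphism of `G`, and endomorphisms do not lower heights,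
so `h(k + l) ≤ h(k)`. Writing `l = -k + (k + l)` then gives `h(k + l) ≤ h(l)`, and the reverse
inequality `min (h k) (h l) ≤ h(k + l)` holds in any group.
-/

section pHeight

variable {G H : Type*} [AddCommGroup G] [AddCommGroup H] (p : ℕ)

theorem natCast_le_pHeight_iff {m : ℕ} {x : G} :
    (m : ℕ∞) ≤ pHeight p x ↔ ∃ y : G, p ^ m • y = x := by
  refine ⟨fun h => ?_, fun ⟨y, hy⟩ => le_sSup ⟨m, rfl, y, hy⟩⟩
  cases m with
  | zero => exact ⟨x, by simp⟩
  | succ m =>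
    have hlt : (m : ℕ∞) < pHeight p x := lt_of_lt_of_le (by exact_mod_cast m.lt_succ_self) h
    obtain ⟨_, ⟨m', rfl, y, rfl⟩, hm'⟩ := lt_sSup_iff.1 hlt
    have hle : m + 1 ≤ m' := by exact_mod_cast Order.add_one_le_of_lt hm'
    exact ⟨p ^ (m' - (m + 1)) • y, by rw [smul_smul, ← pow_add, Nat.add_sub_cancel' hle]⟩

theorem pHeight_le_pHeight_map_s9 (f : G →+ H) (x : G) : pHeight p x ≤ pHeight p (f x) :=
  sSup_le fun _ ⟨m, hm, y, hy⟩ => le_sSup ⟨m, hm, f y, by rw [← map_nsmul, hy]⟩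

theorem pHeight_neg (x : G) : pHeight p (-x) = pHeight p x := by
  have hle (z : G) : pHeight p z ≤ pHeight p (-z) := pHeight_le_pHeight_map_s9 p (-.id G) z
  exact le_antisymm (by simpa using hle (-x)) (hle x)

theorem min_pHeight_le_pHeight_add (a b : G) :
    min (pHeight p a) (pHeight p b) ≤ pHeight p (a + b) := by
  refine ENat.forall_natCast_le_iff_le.1 fun m hm => ?_
  obtain ⟨y, rfl⟩ := (natCast_le_pHeight_iff p).1 (hm.trans (min_le_left _ _))
  obtain ⟨z, rfl⟩ := (natCast_le_pHeight_iff p).1 (hm.trans (min_le_right _ _))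
  exact (natCast_le_pHeight_iff p).2 ⟨y + z, smul_add _ _ _⟩

theorem pHeight_add_le_right_of_le_left {a b : G} (h : pHeight p (a + b) ≤ pHeight p a) :
    pHeight p (a + b) ≤ pHeight p b :=
  calc pHeight p (a + b) ≤ min (pHeight p (-a)) (pHeight p (a + b)) := by
        rw [pHeight_neg]; exact le_min h le_rfl
    _ ≤ pHeight p (-a + (a + b)) := min_pHeight_le_pHeight_add p _ _
    _ = pHeight p b := by rw [neg_add_cancel_left]

theorem pHeight_add_eq_min_of_le_left {a b : G} (h : pHeight p (a + b) ≤ pHeight p a) :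
    pHeight p (a + b) = min (pHeight p a) (pHeight p b) :=
  le_antisymm (le_min h (pHeight_add_le_right_of_le_left p h)) (min_pHeight_le_pHeight_add p a b)

end pHeight

theorem AddSubgroup.exists_projection_sup_of_disjoint {G : Type*} [AddCommGroup G]
    {K L : AddSubgroup G} (h : Disjoint K L) :
    ∃ π : ↥(K ⊔ L) →+ ↥(K ⊔ L),
      ∀ k (hk : k ∈ K) l (hl : l ∈ L), (π ⟨k + l, add_mem_sup hk hl⟩ : G) = k := by
  set p := (K.addSubgroupOf (K ⊔ L)).toIntSubmodule
  set q := (L.addSubgroupOf (K ⊔ L)).toIntSubmodule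
  have hpq : IsCompl p q := by
    refine (OrderIso.isCompl_iff _).1 ⟨?_, codisjoint_addSubgroupOf_sup K L⟩
    exact disjoint_def.2 fun hk hl => Subtype.ext (disjoint_def.1 h hk hl)
  refine ⟨(p.projection q hpq).toAddMonoidHom, fun k hk l hl => ?_⟩
  have hsplit : (⟨k + l, add_mem_sup hk hl⟩ : ↥(K ⊔ L)) =
      ⟨k, mem_sup_left hk⟩ + ⟨l, mem_sup_right hl⟩ := rfl
  rw [LinearMap.toAddMonoidHom_coe, hsplit, map_add,
    Submodule.projection_apply_of_mem_left hpq (show _ ∈ p from hk),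
    Submodule.projection_apply_of_mem_right hpq (show _ ∈ q from hl), add_zero]

theorem stmt9_general {G : Type*} [AddCommGroup G] (p : ℕ)
    (K L : AddSubgroup G) (hKL : Disjoint K L) (hW : InW (K ⊔ L)) :
    ∀ k ∈ K, ∀ l ∈ L, pHeight p (k + l) = min (pHeight p k) (pHeight p l) := by
  intro k hk l hl
  obtain ⟨π, hπ⟩ := exists_projection_sup_of_disjoint hKL
  obtain ⟨g, hg⟩ := hW π
  have hgkl : g (k + l) = k := (hg ⟨k + l, add_mem_sup hk hl⟩).trans (hπ k hk l hl)
  exact pHeight_add_eq_min_of_le_left p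
    ((pHeight_le_pHeight_map_s9 p g (k + l)).trans_eq (by rw [hgkl]))

theorem stmt9 {G : Type*} [AddCommGroup G] (p : ℕ) (hp : p.Prime) (hG : IsPGrp p G)
    (K L : AddSubgroup G) (hKL : Disjoint K L) (hW : InW (K ⊔ L)) :
    ∀ k ∈ K, ∀ l ∈ L, pHeight p (k + l) = min (pHeight p k) (pHeight p l) :=
  stmt9_general p K L hKL hW
end

section
/- Let G be an abelian p-group, K a pure subgroup of G which is a direct sum of cyclic groups with G/K divisible, and H ≤ K a finite subgroup. If f: H → G extends to a homomorphism f̄: K → G with f̄(K) bounded (pᵏ f̄(K) = 0 for some k), then f extends to an endomorphism of G. -/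
open AddSubgroup

theorem stmt10 {G : Type*} [AddCommGroup G] (p : ℕ) (hp : p.Prime) (hG : IsPGrp p G)
    (K : AddSubgroup G) (hpure : IsPure p K) (hcyc : IsDirectSumOfCyclics K)
    (hdiv : QuotDivisible p K)
    (H : AddSubgroup G) (hHK : H ≤ K) (hfin : (H : Set G).Finite)
    (f : H →+ G) (g : K →+ G)
    (hext : ∀ (x : G) (hx : x ∈ H), g ⟨x, hHK hx⟩ = f ⟨x, hx⟩)
    (m : ℕ) (hbd : ∀ y : K, p ^ m • g y = 0) :
    ∃ g' : G →+ G, ∀ x : H, g' x = f x := by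
  classical
  have hdec : ∀ (n : ℕ) (x : G), ∃ y : G, x - p ^ n • y ∈ K := by
    intro n x
    induction n with
    | zero => exact ⟨x, by simpa using K.zero_mem⟩
    | succ n ih =>
      obtain ⟨y, hy⟩ := ih
      obtain ⟨z, hz⟩ := hdiv y
      refine ⟨z, ?_⟩
      have heq : x - p ^ (n + 1) • z = (x - p ^ n • y) + p ^ n • (y - p • z) := by
        rw [smul_sub, smul_smul, ← pow_succ]
        abel
      rw [heq]
      exact K.add_mem hy (K.nsmul_mem hz _)
  have key : ∀ v : K, (∃ u : G, p ^ m • u = (v : G)) → g v = 0 := by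
    intro v hu
    obtain ⟨z, hzK, hz⟩ := hpure m v v.2 hu
    have hv : v = p ^ m • (⟨z, hzK⟩ : K) := Subtype.ext (by simpa using hz.symm)
    rw [hv, map_nsmul]
    exact hbd _
  choose y hy using hdec m
  refine ⟨{ toFun := fun x => g ⟨x - p ^ m • y x, hy x⟩,
            map_zero' := ?_, map_add' := ?_ }, ?_⟩
  · refine key _ ⟨-(y 0), ?_⟩
    push_cast
    rw [smul_neg]; abel
  · intro a b
    rw [← sub_eq_zero, ← map_add, ← map_sub]
    refine key _ ⟨y a + y b - y (a + b), ?_⟩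
    push_cast
    rw [smul_sub, smul_add]; abel
  · intro x
    have hxK : (x : G) ∈ K := hHK x.2
    have h1 : g ⟨(x : G) - p ^ m • y x, hy x⟩ = g ⟨(x : G), hxK⟩ := by
      rw [← sub_eq_zero, ← map_sub]
      refine key _ ⟨-(y x), ?_⟩
      push_cast
      rw [smul_neg]; abel
    simpa [h1] using hext x x.2
end

section
/- Let G be an abelian p-group, K a pure subgroup which is a direct sum of cyclic groups with G/K divisible, and H a finite subgroup of K. If f: H → G extends to a homomorphism K → G, then f extends to a homomorphism K → G with bounded image. -/
open AddSubgroup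

/-!
Write `K = ⨁ᵢ ⟨aᵢ⟩`. The finite subgroup `H` lies in the sum `A` of finitely many of the cyclic
summands, which is bounded because `G` is a `p`-group. Composing the given extension `g` with the
projection of `K` onto `A` along the remaining summands keeps the values on `H` and makes the image
bounded.
-/

namespace AddSubgroup

variable {G : Type*} [AddCommGroup G]

theorem exists_finset_le_biSup_of_finite {ι : Type*} {t : ι → AddSubgroup G} {H : AddSubgroup G}
    (hH : (H : Set G).Finite) (hle : H ≤ ⨆ i, t i) : ∃ s : Finset ι, H ≤ ⨆ i ∈ s, t i := by
  have hcompact : IsCompactElement (toIntSubmodule H) := by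
    have := Submodule.finite_span_isCompactElement (R := ℤ) _ hH
    rwa [← toIntSubmodule_closure, closure_eq] at this
  obtain ⟨s, hs⟩ := CompleteLattice.IsCompactElement.exists_finset_of_le_iSup _ hcompact
    (fun i => toIntSubmodule (t i)) (by rwa [← OrderIso.map_iSup, OrderIso.le_iff_le])
  refine ⟨s, ?_⟩
  rwa [← OrderIso.map_iSup₂, OrderIso.le_iff_le] at hs

theorem exists_retraction_of_disjoint_of_sup_eq {A B K : AddSubgroup G} (hAB : Disjoint A B)
    (hK : A ⊔ B = K) : ∃ ρ : K →+ K, (∀ x : K, (x : G) ∈ A → ρ x = x) ∧ ∀ x, (ρ x : G) ∈ A := by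
  subst hK
  have hcompl : IsCompl (A.addSubgroupOf (A ⊔ B)) (B.addSubgroupOf (A ⊔ B)) := by
    refine ⟨?_, codisjoint_addSubgroupOf_sup A B⟩
    rw [disjoint_def] at hAB ⊢
    exact fun hxA hxB => Subtype.ext (hAB hxA hxB)
  replace hcompl := toIntSubmodule.isCompl hcompl
  exact ⟨(Submodule.projection _ _ hcompl).toAddMonoidHom,
    fun x hx => Submodule.projection_apply_of_mem_left hcompl hx,
    fun x => Submodule.projection_apply_mem hcompl x⟩

end AddSubgroup

theorem IsPGrp.exists_pow_nsmul_eq_zero_of_mem_biSup {p : ℕ} {G ι : Type*} [AddCommGroup G]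
    (hG : IsPGrp p G) (a : ι → G) (s : Finset ι) :
    ∃ m : ℕ, ∀ x ∈ ⨆ i ∈ s, zmultiples (a i), p ^ m • x = 0 := by
  choose n hn using fun i => hG (a i)
  refine ⟨s.sup n, fun x hx => ?_⟩
  suffices ⨆ i ∈ s, zmultiples (a i) ≤ (nsmulAddMonoidHom (p ^ s.sup n)).ker from this hx
  refine iSup₂_le fun i hi => zmultiples_le.2 ?_
  obtain ⟨k, hk⟩ := Nat.exists_eq_add_of_le (Finset.le_sup (f := n) hi)
  rw [AddMonoidHom.mem_ker, nsmulAddMonoidHom_apply, hk, pow_add, mul_nsmul, hn i, nsmul_zero]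

theorem stmt11_general {G : Type*} [AddCommGroup G] (p : ℕ) (hG : IsPGrp p G)
    (K : AddSubgroup G) (hcyc : IsDirectSumOfCyclics K)
    (H : AddSubgroup G) (hHK : H ≤ K) (hfin : (H : Set G).Finite)
    (f : H →+ G) (g : K →+ G)
    (hext : ∀ (x : G) (hx : x ∈ H), g ⟨x, hHK hx⟩ = f ⟨x, hx⟩) :
    ∃ g' : K →+ G, (∀ (x : G) (hx : x ∈ H), g' ⟨x, hHK hx⟩ = f ⟨x, hx⟩) ∧
      ∃ m : ℕ, ∀ y : K, p ^ m • g' y = 0 := by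
  obtain ⟨ι, a, -, hsup, hindep⟩ := hcyc
  obtain ⟨s, hHs⟩ := exists_finset_le_biSup_of_finite hfin (hHK.trans hsup.ge)
  obtain ⟨ρ, hρ_fix, hρ_mem⟩ := exists_retraction_of_disjoint_of_sup_eq
    (hindep.disjoint_biSup_biSup' (disjoint_compl_right (a := (s : Set ι))) s.finite_toSet)
    ((iSup_split _ (· ∈ s)).symm.trans hsup)
  obtain ⟨m, hm⟩ := hG.exists_pow_nsmul_eq_zero_of_mem_biSup a s
  refine ⟨g.comp ρ, fun x hx => ?_, m, fun y => ?_⟩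
  · rw [AddMonoidHom.comp_apply, hρ_fix _ (hHs hx), hext]
  · rw [AddMonoidHom.comp_apply, ← map_nsmul,
      show p ^ m • ρ y = 0 from Subtype.ext (hm _ (hρ_mem y)), map_zero]

theorem stmt11 {G : Type*} [AddCommGroup G] (p : ℕ) (hp : p.Prime) (hG : IsPGrp p G)
    (K : AddSubgroup G) (hpure : IsPure p K) (hcyc : IsDirectSumOfCyclics K)
    (hdiv : QuotDivisible p K)
    (H : AddSubgroup G) (hHK : H ≤ K) (hfin : (H : Set G).Finite)
    (f : H →+ G) (g : K →+ G)
    (hext : ∀ (x : G) (hx : x ∈ H), g ⟨x, hHK hx⟩ = f ⟨x, hx⟩) :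
    ∃ g' : K →+ G, (∀ (x : G) (hx : x ∈ H), g' ⟨x, hHK hx⟩ = f ⟨x, hx⟩) ∧
      ∃ m : ℕ, ∀ y : K, p ^ m • g' y = 0 :=
  stmt11_general p hG K hcyc H hHK hfin f g hext
end

section
/- There exists a finite abelian p-group G containing elements x, y such that ⟨x⟩ and ⟨y⟩ are each direct summands of G (hence in Q(G)), but ⟨x⟩ ⊕ ⟨y⟩ ∉ Q(G). Concretely, for G = ℤ/p ⊕ ℤ/p² ⊕ ℤ/p², x = (1, p, 0) and y = (1, 0, p) work: the direct sum ⟨x⟩ ⊕ ⟨y⟩ is not a valuated direct sum. -/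
open AddSubgroup

/-!
Both `x = (1, p, 0)` and `y = (1, 0, p)` have order `p` and first coordinate `1`, so each generates
a complement of the kernel of the first projection. The sum `⟨x⟩ ⊕ ⟨y⟩` is not valuated:
`x - y = p • (0, 1, -1)` has height `1` while `x` has height `0`. Hence the projection of
`⟨x⟩ ⊕ ⟨y⟩` onto `⟨x⟩` along `⟨y⟩` does not extend to `G`, as an extension `g` would give
`x = g (x - y) = p • g (0, 1, -1) ∈ pG`.
-/
section

variable {G : Type*} [AddCommGroup G] {A B : AddSubgroup G}

theorem AddSubgroup.range_coprod_subtype : (A.subtype.coprod B.subtype).range = A ⊔ B := by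
  ext x
  simp [mem_sup, AddMonoidHom.mem_range, AddMonoidHom.coprod_apply]

theorem AddSubgroup.coprod_subtype_injective (h : Disjoint A B) :
    Function.Injective (A.subtype.coprod B.subtype) := by
  rw [injective_iff_map_eq_zero]
  rintro ⟨a, b⟩ hab
  obtain ⟨ha, hb⟩ := disjoint_iff_add_eq_zero.mp h a.2 b.2 hab
  ext <;> simp [ha, hb]

theorem InQ.exists_map_add_eq_left (hQ : InQ (A ⊔ B)) (h : Disjoint A B) :
    ∃ g : G →+ G, ∀ a ∈ A, ∀ b ∈ B, g (a + b) = a := by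
  rw [← range_coprod_subtype] at hQ
  let e := AddMonoidHom.ofInjective (coprod_subtype_injective h)
  obtain ⟨g, hg⟩ := hQ ((A.subtype.comp (AddMonoidHom.fst A B)).comp e.symm.toAddMonoidHom)
  refine ⟨g, fun a ha b hb => ?_⟩
  have he : (e (⟨a, ha⟩, ⟨b, hb⟩) : G) = a + b := rfl
  simpa only [he, AddMonoidHom.comp_apply, AddEquiv.coe_toAddMonoidHom, AddEquiv.symm_apply_apply,
      AddMonoidHom.coe_fst, AddSubgroup.coe_subtype]
    using hg (e (⟨a, ha⟩, ⟨b, hb⟩))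

theorem not_inQ_sup_of_disjoint (h : Disjoint A B) {x y : G} (hx : x ∈ A) (hy : y ∈ B) {n : ℕ}
    (hxy : ∃ z, n • z = x - y) (hx_not_div : ∀ z, n • z ≠ x) : ¬ InQ (A ⊔ B) := by
  intro hQ
  obtain ⟨g, hg⟩ := hQ.exists_map_add_eq_left h
  obtain ⟨z, hz⟩ := hxy
  have hgxy : g (x + -y) = x := hg x hx (-y) (neg_mem hy)
  rw [← sub_eq_add_neg, ← hz, map_nsmul] at hgxy
  exact hx_not_div _ hgxy

end

theorem isCompl_zmultiples_ker {G : Type*} [AddCommGroup G] {n : ℕ} [NeZero n] (f : G →+ ZMod n)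
    {v : G} (hfv : f v = 1) (hv : n • v = 0) : IsCompl (zmultiples v) f.ker := by
  constructor
  · rw [disjoint_def]
    rintro _ ⟨k, rfl⟩ hk
    rw [AddMonoidHom.mem_ker, map_zsmul, hfv, zsmul_one, ZMod.intCast_zmod_eq_zero_iff_dvd] at hk
    obtain ⟨m, rfl⟩ := hk
    simp only [mul_comm, mul_zsmul, natCast_zsmul, hv, zsmul_zero]
  · rw [codisjoint_iff_le_sup]
    intro w _
    refine mem_sup.mpr ⟨(f w).val • v, nsmul_mem (mem_zmultiples v) _, w - (f w).val • v, ?_,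
      add_sub_cancel _ _⟩
    rw [AddMonoidHom.mem_ker, map_sub, map_nsmul, hfv, nsmul_one, ZMod.natCast_zmod_val, sub_self]

theorem disjoint_zmultiples_ker {G H : Type*} [AddGroup G] [AddGroup H] (f : G →+ H) {x : G}
    (h : addOrderOf (f x) = addOrderOf x) : Disjoint (zmultiples x) f.ker := by
  rw [disjoint_def]
  rintro _ ⟨k, rfl⟩ hk
  rw [AddMonoidHom.mem_ker, map_zsmul, ← addOrderOf_dvd_iff_zsmul_eq_zero, h] at hk
  exact addOrderOf_dvd_iff_zsmul_eq_zero.mp hk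

theorem ZMod.addOrderOf_natCast_sq {p : ℕ} (hp : p ≠ 0) : addOrderOf (p : ZMod (p ^ 2)) = p := by
  rw [ZMod.addOrderOf_coe' _ hp, Nat.gcd_eq_right (dvd_pow_self p two_ne_zero), sq,
    Nat.mul_div_cancel _ (Nat.pos_of_ne_zero hp)]

theorem stmt15 (p : ℕ) (hp : p.Prime) :
    ∃ x y : ZMod p × ZMod (p ^ 2) × ZMod (p ^ 2),
      (∃ K, IsCompl (zmultiples x) K) ∧ (∃ K, IsCompl (zmultiples y) K) ∧
      Disjoint (zmultiples x) (zmultiples y) ∧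
      ¬ InQ (zmultiples x ⊔ zmultiples y) := by
  have : Fact p.Prime := ⟨hp⟩
  let x : ZMod p × ZMod (p ^ 2) × ZMod (p ^ 2) := (1, p, 0)
  let y : ZMod p × ZMod (p ^ 2) × ZMod (p ^ 2) := (1, 0, p)
  have hp_ord := ZMod.addOrderOf_natCast_sq hp.ne_zero
  have hx : addOrderOf x = p := by simp [x, Prod.addOrderOf, hp_ord]
  have hy : addOrderOf y = p := by simp [y, Prod.addOrderOf, hp_ord]
  have hx0 : p • x = 0 := by simpa only [hx] using addOrderOf_nsmul_eq_zero x
  have hy0 : p • y = 0 := by simpa only [hy] using addOrderOf_nsmul_eq_zero y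
  have hxy : Disjoint (zmultiples x) (zmultiples y) :=
    (disjoint_zmultiples_ker ((AddMonoidHom.fst _ _).comp (AddMonoidHom.snd _ _))
      (by simp [x, hx, hp_ord])).mono_right (zmultiples_le_of_mem (by simp [y]))
  refine ⟨x, y, ⟨_, isCompl_zmultiples_ker (AddMonoidHom.fst _ _) rfl hx0⟩,
    ⟨_, isCompl_zmultiples_ker (AddMonoidHom.fst _ _) rfl hy0⟩, hxy,
    not_inQ_sup_of_disjoint hxy (mem_zmultiples x) (mem_zmultiples y) (n := p)
      ⟨(0, 1, -1), by simp [x, y]⟩ fun z hz => ?_⟩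
  have hfst : p • z.1 = 1 := congrArg Prod.fst hz
  simp at hfst
end

section
/- Let G be an abelian p-group and H a subgroup such that every monomorphism H → G extends to an endomorphism of G. If K is a cyclic direct summand of H, then every monomorphism K → G extends to an endomorphism of G. -/
open AddSubgroup

/-!
Write `K = ⟨a⟩` with `a` of order `p ^ (n + 1)` and let `f : K →+ G`. For `v = 0` or `v = 1`
the element `p ^ n • (f a + v • a)` lies outside `L`, because `p ^ n • a` is a nonzero element
of `K`; hence `φ = f + v • ι` is injective modulo `L`. Then `k + l ↦ φ k + l` is a monomorphism
`K ⊕ L → G`, its extension `g` to `G` exists by hypothesis, and `g - v • id` extends `f`.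
-/

section

variable {G : Type*} [AddCommGroup G]

noncomputable def AddSubgroup.prodAddEquivSupOfDisjoint {K L : AddSubgroup G}
    (hKL : Disjoint K L) : K × L ≃+ (K ⊔ L : AddSubgroup G) :=
  AddEquiv.ofBijective ((inclusion le_sup_left).coprod (inclusion le_sup_right)) <| by
    refine ⟨(injective_iff_map_eq_zero _).2 fun ⟨k, l⟩ h => ?_, fun ⟨x, hx⟩ => ?_⟩
    · have hkl : (k : G) + l = 0 := congrArg Subtype.val h
      have hk : (k : G) = 0 :=
        disjoint_def.mp hKL k.2 (eq_neg_of_add_eq_zero_left hkl ▸ neg_mem l.2)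
      have hl : (l : G) = 0 := by rwa [hk, zero_add] at hkl
      ext <;> simp [hk, hl]
    · obtain ⟨k, hk, l, hl, rfl⟩ := mem_sup.mp hx
      exact ⟨(⟨k, hk⟩, ⟨l, hl⟩), rfl⟩

@[simp]
theorem AddSubgroup.prodAddEquivSupOfDisjoint_apply {K L : AddSubgroup G} (hKL : Disjoint K L)
    (x : K × L) : (prodAddEquivSupOfDisjoint hKL x : G) = x.1 + x.2 :=
  rfl

theorem exists_injective_extension_to_sup {K L : AddSubgroup G} (hKL : Disjoint K L)
    (φ : K →+ G) (hφ : Function.Injective ((QuotientAddGroup.mk' L).comp φ)) :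
    ∃ Ψ : (K ⊔ L : AddSubgroup G) →+ G, Function.Injective Ψ ∧
      ∀ k : K, Ψ (inclusion le_sup_left k) = φ k := by
  let e := prodAddEquivSupOfDisjoint hKL
  let θ : K × L →+ G := φ.coprod L.subtype
  have hθ : Function.Injective θ := by
    refine (injective_iff_map_eq_zero _).2 fun ⟨k, l⟩ h => ?_
    have hφk : φ k = -l := eq_neg_of_add_eq_zero_left h
    have hk : k = 0 := (injective_iff_map_eq_zero _).1 hφ k <|
      (QuotientAddGroup.eq_zero_iff _).2 (hφk ▸ neg_mem l.2)
    have hl : l = 0 := by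
      simpa [hk] using hφk
    simp [hk, hl]
  refine ⟨θ.comp e.symm.toAddMonoidHom, hθ.comp e.symm.injective, fun k => ?_⟩
  have hk : inclusion le_sup_left k = e (k, 0) := Subtype.ext (by simp [e])
  simp [θ, hk]

theorem InP.exists_extension_of_disjoint {K L : AddSubgroup G} (hP : InP (K ⊔ L))
    (hKL : Disjoint K L) (f : K →+ G) (v : ℤ)
    (hv : Function.Injective ((QuotientAddGroup.mk' L).comp (f + v • K.subtype))) :
    ∃ g : G →+ G, ∀ k : K, g k = f k := by
  obtain ⟨Ψ, hΨ, hΨK⟩ := exists_injective_extension_to_sup hKL _ hv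
  obtain ⟨g, hg⟩ := hP Ψ hΨ
  refine ⟨g - v • AddMonoidHom.id G, fun k => ?_⟩
  rw [AddMonoidHom.sub_apply, ← coe_inclusion le_sup_left k, hg, hΨK]
  simp

theorem zsmul_mem_iff_prime_pow_dvd {p n : ℕ} [Fact p.Prime] {L : AddSubgroup G} {c : G}
    (hc : p ^ (n + 1) • c ∈ L) (hc' : p ^ n • c ∉ L) (m : ℤ) :
    m • c ∈ L ↔ (p : ℤ) ^ (n + 1) ∣ m := by
  have hord : addOrderOf (c : G ⧸ L) = p ^ (n + 1) :=
    addOrderOf_eq_prime_pow (by rwa [← QuotientAddGroup.mk_nsmul, QuotientAddGroup.eq_zero_iff])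
      (by rwa [← QuotientAddGroup.mk_nsmul, QuotientAddGroup.eq_zero_iff])
  rw [← QuotientAddGroup.eq_zero_iff, QuotientAddGroup.mk_zsmul,
    ← addOrderOf_dvd_iff_zsmul_eq_zero, hord]
  push_cast
  rfl

theorem exists_pow_succ_nsmul_eq_zero_of_ne_zero {p : ℕ} {a : G} (ha : ∃ N, p ^ N • a = 0)
    (ha0 : a ≠ 0) :
    ∃ n, p ^ (n + 1) • a = 0 ∧ p ^ n • a ≠ 0 := by
  classical
  obtain ⟨n, hn⟩ : ∃ n, Nat.find ha = n + 1 :=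
    Nat.exists_eq_add_one.mpr <| Nat.pos_of_ne_zero fun h0 => ha0 <| by
      simpa [h0] using Nat.find_spec ha
  exact ⟨n, hn ▸ Nat.find_spec ha, Nat.find_min ha (by omega)⟩

theorem exists_injective_mod_add_zsmul_subtype {p : ℕ} [Fact p.Prime] {a : G}
    (ha : ∃ N, p ^ N • a = 0) {L : AddSubgroup G} (hKL : Disjoint (zmultiples a) L)
    (f : zmultiples a →+ G) :
    ∃ v : ℤ, Function.Injective
      ((QuotientAddGroup.mk' L).comp (f + v • (zmultiples a).subtype)) := by
  rcases eq_or_ne a 0 with rfl | ha0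
  · refine ⟨0, fun x y _ => Subtype.ext ?_⟩
    obtain ⟨i, hi⟩ := mem_zmultiples_iff.mp x.2
    obtain ⟨j, hj⟩ := mem_zmultiples_iff.mp y.2
    rw [← hi, ← hj, zsmul_zero, zsmul_zero]
  obtain ⟨n, hn, hn'⟩ := exists_pow_succ_nsmul_eq_zero_of_ne_zero ha ha0
  have hna : p ^ n • a ∉ L := fun h =>
    hn' (disjoint_def.mp hKL (nsmul_mem (mem_zmultiples a) _) h)
  let a₀ : zmultiples a := ⟨a, mem_zmultiples a⟩
  obtain ⟨v, hv⟩ : ∃ v : ℤ, p ^ n • (f a₀ + v • a) ∉ L := by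
    by_cases hs : p ^ n • f a₀ ∈ L
    · exact ⟨1, fun h => hna (by simpa [smul_add] using sub_mem h hs)⟩
    · exact ⟨0, by simpa using hs⟩
  have hc : p ^ (n + 1) • (f a₀ + v • a) = 0 := by
    have : p ^ (n + 1) • a₀ = 0 := Subtype.ext hn
    rw [smul_add, ← map_nsmul, this, map_zero, smul_comm, hn, smul_zero, add_zero]
  refine ⟨v, (injective_iff_map_eq_zero _).2 fun ⟨k, hk⟩ hk0 => ?_⟩
  obtain ⟨m, rfl⟩ := mem_zmultiples_iff.mp hk
  have hm : m • (f a₀ + v • a) ∈ L := by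
    have hk' : (⟨m • a, hk⟩ : zmultiples a) = m • a₀ := rfl
    simpa [hk', smul_add, smul_comm m v] using (QuotientAddGroup.eq_zero_iff _).1 hk0
  obtain ⟨d, rfl⟩ := (zsmul_mem_iff_prime_pow_dvd (hc ▸ zero_mem L) hv m).mp hm
  have hn_int : ((p : ℤ) ^ (n + 1)) • a = 0 := by
    rw [← hn, ← natCast_zsmul]
    push_cast
    rfl
  ext
  simp [mul_comm _ d, mul_zsmul, hn_int]

end

theorem stmt16 {G : Type*} [AddCommGroup G] (p : ℕ) (hp : p.Prime) (hG : IsPGrp p G)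
    (H K L : AddSubgroup G) (hP : InP H)
    (hKL : Disjoint K L) (hsup : K ⊔ L = H) (a : G) (ha : K = zmultiples a) :
    InP K := by
  have := Fact.mk hp
  subst hsup ha
  intro f _
  obtain ⟨v, hv⟩ := exists_injective_mod_add_zsmul_subtype (hG a) hKL f
  exact hP.exists_extension_of_disjoint hKL f v hv
end

section
/- Let G be an abelian group, F a finite-rank free subgroup of G, and φ: F → G a homomorphism. For each positive integer i let Uᵢ = {x ∈ F : φ(x) = i·x}. Then the subgroups Uᵢ (i ≥ 1) form an internal direct sum in F; in particular only finitely many Uᵢ are nonzero, so there exists N such that φ(x) = n·x has only the solution x = 0 for all n ≥ N. -/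
open AddSubgroup

/-!
The classical argument that eigenvectors for distinct eigenvalues are independent only needs
`φ` and the inclusion `F → G` to be linear maps out of the same torsion-free module, with the
inclusion injective: from a relation `∑ xⱼ = 0` among `xⱼ` with `φ xⱼ = cⱼ xⱼ`, applying
`φ - c₀` yields the shorter relation `∑ (cⱼ - c₀) xⱼ = 0`. Since `F` is finitely generated, hence
Noetherian, an independent family of its subgroups has only finitely many nonzero members.
-/

theorem iSupIndep_ker_sub_smul {R M N : Type*} [CommRing R] [IsDomain R] [AddCommGroup M]
    [Module R M] [Module.IsTorsionFree R M] [AddCommGroup N] [Module R N] {ι : M →ₗ[R] N}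
    (hι : Function.Injective ι) (φ : M →ₗ[R] N) :
    iSupIndep fun μ : R => LinearMap.ker (φ - μ • ι) := by
  classical
  rw [iSupIndep_iff_finsetSum_eq_zero_imp_eq_zero]
  intro s
  induction s using Finset.induction_on with
  | empty => simp
  | @insert μ₀ s hμ₀ ih =>
    intro v hv hsum
    have hφv : ∀ μ ∈ insert μ₀ s, φ (v μ) = μ • ι (v μ) := fun μ hμ => by
      simpa [sub_eq_zero] using hv μ hμ
    have hshift : ∑ μ ∈ s, (μ - μ₀) • v μ = 0 := by
      apply hι
      have := congrArg (φ - μ₀ • ι) hsum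
      rw [map_sum, Finset.sum_insert hμ₀] at this
      simpa [sub_smul, Finset.sum_congr rfl fun μ hμ => hφv μ (Finset.mem_insert_of_mem hμ),
        hφv μ₀ (Finset.mem_insert_self _ _)] using this
    have hs : ∀ μ ∈ s, v μ = 0 := fun μ hμ => by
      have := ih (fun μ => (μ - μ₀) • v μ) (fun μ hμ => Submodule.smul_mem _ _
        (hv μ (Finset.mem_insert_of_mem hμ))) hshift μ hμ
      exact (smul_eq_zero.mp this).resolve_left (sub_ne_zero.mpr (ne_of_mem_of_not_mem hμ hμ₀))
    intro μ hμ
    rcases Finset.mem_insert.mp hμ with rfl | hμ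
    · simpa [Finset.sum_insert hμ₀, Finset.sum_eq_zero hs] using hsum
    · exact hs μ hμ

theorem stmt18 {G : Type*} [AddCommGroup G] (F : AddSubgroup G)
    [Module.Free ℤ F] [Module.Finite ℤ F] (φ : F →+ G) :
    iSupIndep (fun i : ℕ+ => AddMonoidHom.ker (φ - (i : ℕ) • F.subtype)) ∧
      ∃ N : ℕ, ∀ n : ℕ, N ≤ n → ∀ x : F, φ x = n • x → x = 0 := by
  set E : ℤ → Submodule ℤ F := fun μ =>
    LinearMap.ker (φ.toIntLinearMap - μ • F.subtype.toIntLinearMap)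
  have mem_E (n : ℕ) (x : F) : x ∈ E n ↔ φ x = n • x := by
    simp [E, sub_eq_zero]
  have hE : iSupIndep E := iSupIndep_ker_sub_smul Subtype.val_injective _
  refine ⟨?_, ?_⟩
  · rw [← iSupIndep_map_orderIso_iff AddSubgroup.toIntSubmodule]
    convert hE.comp (f := fun i : ℕ+ => ((i : ℕ) : ℤ)) fun i j h => by simpa using h
    ext i x
    change x ∈ AddMonoidHom.ker _ ↔ x ∈ E (i : ℕ)
    rw [AddMonoidHom.mem_ker, mem_E]
    simp [sub_eq_zero]
  · obtain ⟨B, hB⟩ := (Submodule.finite_ne_bot_of_iSupIndep hE).bddAbove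
    refine ⟨B.toNat + 1, fun n hn x hx => ?_⟩
    by_contra hx0
    have : (n : ℤ) ≤ B := hB ((Submodule.ne_bot_iff _).2 ⟨x, (mem_E n x).2 hx, hx0⟩)
    omega
end
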